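/- arXiv:2011.09973 — 7 statements merged into one kernel-verified Lean document; each statement's English description precedes it below -/
import Mathlib

section
/- Let w^(0) ∈ ℝ^n be saturated, let N ∈ ℕ, and consider the updates: for each 0 ≤ t < N, let τ^(t) ∈ ℝ^n be entrywise nonnegative scores that are safe with respect to w^(t), assume ‖w^(t)_T‖₁ > 0, ‖w^(t)_S‖₁ > 0 and τ^(t)_max := max{ τ^(t)_i : i with w^(t)_i ≠ 0 } > 0, and set w^(t+1)_i := (1 − τ^(t)_i/τ^(t)_max)·w^(t)_i for every i ∈ {1,…,n}. Then w^(N) is saturated. -/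
open Finset

/-- Total weight of `w` on a finite index set `T'`: `‖w_{T'}‖₁ = ∑_{i ∈ T'} w_i`. -/
def wsum {n : ℕ} (w : Fin n → ℝ) (T' : Finset (Fin n)) : ℝ := ∑ i ∈ T', w i

/-- `w` is a saturated weight vector: it is a valid weight vector (entrywise nonnegative with
total mass at most 1), each entry is at most `1/n`, and `‖w_S‖₁ ≥ α · √(‖w_T‖₁)`. -/
def Saturated {n : ℕ} (α : ℝ) (S : Finset (Fin n)) (w : Fin n → ℝ) : Prop :=
  (∀ i, 0 ≤ w i) ∧ (∑ i, w i) ≤ 1 ∧ (∀ i, w i ≤ 1 / n) ∧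
    α * Real.sqrt (wsum w Finset.univ) ≤ wsum w S

/-- Scores `τ` are safe with respect to `w`:
`∑_{i∈S} (w_i/‖w_S‖₁)·τ_i ≤ (1/2)·∑_{i∈T} (w_i/‖w_T‖₁)·τ_i`. -/
def Safe {n : ℕ} (S : Finset (Fin n)) (w τ : Fin n → ℝ) : Prop :=
  ∑ i ∈ S, (w i / wsum w S) * τ i ≤ (1 / 2) * ∑ i, (w i / wsum w Finset.univ) * τ i

private lemma saturated_step {n : ℕ} (α : ℝ) (hα : 0 < α)
    (S : Finset (Fin n)) (w w' τ : Fin n → ℝ) (τmax : ℝ)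
    (hsat : Saturated α S w)
    (hτnn : ∀ i, 0 ≤ τ i)
    (hsafe : Safe S w τ)
    (hTpos : 0 < wsum w Finset.univ)
    (hSpos : 0 < wsum w S)
    (hmax : IsGreatest {x : ℝ | ∃ i, w i ≠ 0 ∧ x = τ i} τmax)
    (hmaxpos : 0 < τmax)
    (hw' : ∀ i, w' i = (1 - τ i / τmax) * w i) :
    Saturated α S w' := by
  obtain ⟨hnn, hsum1, hle, hS⟩ := hsat
  -- per-term bound
  have hkey : ∀ i, τ i * w i ≤ τmax * w i := by
    intro i
    rcases eq_or_ne (w i) 0 with h | h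
    · simp [h]
    · exact mul_le_mul_of_nonneg_right (hmax.2 ⟨i, h, rfl⟩) (hnn i)
  have hw'nn : ∀ i, 0 ≤ w' i := by
    intro i
    rw [hw' i]
    have : τ i / τmax * w i ≤ w i := by
      rw [div_mul_eq_mul_div, div_le_iff₀ hmaxpos]
      nlinarith [hkey i]
    nlinarith
  have hw'le : ∀ i, w' i ≤ w i := by
    intro i
    rw [hw' i]
    have h1 : 0 ≤ τ i / τmax * w i :=
      mul_nonneg (div_nonneg (hτnn i) hmaxpos.le) (hnn i)
    nlinarith
  refine ⟨hw'nn, ?_, fun i => (hw'le i).trans (hle i), ?_⟩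
  · exact le_trans (Finset.sum_le_sum (fun i _ => hw'le i)) hsum1
  -- the main inequality
  set W := wsum w Finset.univ with hW
  set Ws := wsum w S with hWs
  set B := ∑ i, τ i * w i with hB
  set A := ∑ i ∈ S, τ i * w i with hA
  have hsumT' : ∀ T' : Finset (Fin n),
      wsum w' T' = wsum w T' - (∑ i ∈ T', τ i * w i) / τmax := by
    intro T'
    simp only [wsum, hw']
    rw [Finset.sum_div, ← Finset.sum_sub_distrib]
    apply Finset.sum_congr rfl
    intro i _
    field_simp
  have hBle : B ≤ τmax * W := by
    have := Finset.sum_le_sum (fun i (_ : i ∈ Finset.univ) => hkey i)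
    simpa [hB, hW, wsum, Finset.mul_sum] using this
  have hAnn : 0 ≤ A :=
    Finset.sum_nonneg fun i _ => mul_nonneg (hτnn i) (hnn i)
  have hBA : A ≤ B := by
    apply Finset.sum_le_sum_of_subset_of_nonneg (Finset.subset_univ S)
    intro i _ _; exact mul_nonneg (hτnn i) (hnn i)
  -- safe rewritten
  have hsafe' : A / Ws ≤ 1 / 2 * (B / W) := by
    have e1 : ∑ i ∈ S, (w i / Ws) * τ i = A / Ws := by
      rw [hA, Finset.sum_div]; apply Finset.sum_congr rfl; intros; ring
    have e2 : ∑ i, (w i / W) * τ i = B / W := by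
      rw [hB, Finset.sum_div]; apply Finset.sum_congr rfl; intros; ring
    have := hsafe
    rwa [Safe, e1, e2] at this
  have hAle : A ≤ Ws * B / (2 * W) := by
    have h2 := (div_le_iff₀ hSpos).mp hsafe'
    rw [le_div_iff₀ (by positivity : (0:ℝ) < 2 * W)]
    have h3 : 1 / 2 * (B / W) * Ws * (2 * W) = Ws * B := by field_simp
    nlinarith [mul_le_mul_of_nonneg_right h2 (by positivity : (0:ℝ) ≤ 2 * W)]
  set δ := B / τmax with hδ
  have hδnn : 0 ≤ δ := div_nonneg (hAnn.trans hBA) hmaxpos.le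
  have hδle : δ ≤ W := by
    rw [hδ, div_le_iff₀ hmaxpos]; nlinarith
  have hu : 0 ≤ 1 - δ / (2 * W) := by
    have : δ / (2 * W) ≤ 1 / 2 := by
      rw [div_le_div_iff₀ (by positivity) (by norm_num)]; nlinarith
    linarith
  have hsqrt : Real.sqrt (W - δ) ≤ Real.sqrt W * (1 - δ / (2 * W)) := by
    have h1 : W - δ ≤ W * (1 - δ / (2 * W)) ^ 2 := by
      have h2 : 2 * W * (δ / (2 * W)) = δ := by field_simp
      nlinarith [sq_nonneg (δ / (2 * W)), hTpos]
    calc Real.sqrt (W - δ) ≤ Real.sqrt (W * (1 - δ / (2 * W)) ^ 2) :=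
          Real.sqrt_le_sqrt h1
      _ = Real.sqrt W * (1 - δ / (2 * W)) := by
          rw [Real.sqrt_mul hTpos.le, Real.sqrt_sq hu]
  have hWT' : wsum w' Finset.univ = W - δ := by rw [hsumT', hδ, hB]
  have hWS' : wsum w' S = Ws - A / τmax := by rw [hsumT', hA]
  rw [hWT', hWS']
  have hAδ : A / τmax ≤ Ws * δ / (2 * W) := by
    have e : Ws * δ / (2 * W) = (Ws * B / (2 * W)) / τmax := by
      rw [hδ]; ring
    rw [e]
    exact div_le_div_of_nonneg_right hAle hmaxpos.le
  calc α * Real.sqrt (W - δ)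
      ≤ α * (Real.sqrt W * (1 - δ / (2 * W))) :=
        mul_le_mul_of_nonneg_left hsqrt hα.le
    _ = (α * Real.sqrt W) * (1 - δ / (2 * W)) := by ring
    _ ≤ Ws * (1 - δ / (2 * W)) := mul_le_mul_of_nonneg_right hS hu
    _ = Ws - Ws * δ / (2 * W) := by ring
    _ ≤ Ws - A / τmax := by linarith [hAδ]

/-- Downweighting with safe scores preserves saturation. -/
theorem saturated_of_safe_downweighting {n : ℕ} (hn : 1 ≤ n)
    (α : ℝ) (hα : 0 < α) (hα' : α ≤ 1 / 2)
    (S : Finset (Fin n)) (hScard : (S.card : ℝ) = α * n)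
    (N : ℕ) (w : ℕ → Fin n → ℝ) (τ : ℕ → Fin n → ℝ) (τmax : ℕ → ℝ)
    (h0 : Saturated α S (w 0))
    (hτnn : ∀ t, t < N → ∀ i, 0 ≤ τ t i)
    (hsafe : ∀ t, t < N → Safe S (w t) (τ t))
    (hTpos : ∀ t, t < N → 0 < wsum (w t) Finset.univ)
    (hSpos : ∀ t, t < N → 0 < wsum (w t) S)
    (hmax : ∀ t, t < N → IsGreatest {x : ℝ | ∃ i, w t i ≠ 0 ∧ x = τ t i} (τmax t))
    (hmaxpos : ∀ t, t < N → 0 < τmax t)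
    (hupd : ∀ t, t < N → ∀ i, w (t + 1) i = (1 - τ t i / τmax t) * w t i) :
    Saturated α S (w N) := by
  have key : ∀ k, k ≤ N → Saturated α S (w k) := by
    intro k
    induction k with
    | zero => intro _; exact h0
    | succ t ih =>
      intro hk
      have ht : t < N := hk
      exact saturated_step α hα S (w t) (w (t + 1)) (τ t) (τmax t)
        (ih ht.le) (hτnn t ht) (hsafe t ht) (hTpos t ht) (hSpos t ht)
        (hmax t ht) (hmaxpos t ht) (hupd t ht)
  exact key N le_rfl
end

section
/- Suppose assumption (A) holds, and let w ∈ ℝ^n satisfy 0 ≤ w_i ≤ 1/n for all i, ∑_{i=1}^n w_i ≤ 1, and ‖w_S‖₁ > 0. Then Cov_w(S) ⪯ (α/‖w_S‖₁)·I_d in the Loewner order. -/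
open Finset
open Matrix

/-- Weighted empirical mean `μ_w(T') = ∑_{i∈T'} (w_i/‖w_{T'}‖₁)·X_i`. -/
noncomputable def wmean {d n : ℕ} (X : Fin n → Fin d → ℝ) (w : Fin n → ℝ) (T' : Finset (Fin n)) :
    Fin d → ℝ :=
  ∑ i ∈ T', (w i / wsum w T') • X i

/-- Weighted empirical covariance
`Cov_w(T') = ∑_{i∈T'} (w_i/‖w_{T'}‖₁)·(X_i − μ_w(T'))(X_i − μ_w(T'))ᵀ`. -/
noncomputable def wcov {d n : ℕ} (X : Fin n → Fin d → ℝ) (w : Fin n → ℝ) (T' : Finset (Fin n)) :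
    Matrix (Fin d) (Fin d) ℝ :=
  ∑ i ∈ T', (w i / wsum w T') • Matrix.vecMulVec (X i - wmean X w T') (X i - wmean X w T')

lemma quad_vmv {d : ℕ} (u x : Fin d → ℝ) :
    x ⬝ᵥ (Matrix.vecMulVec u u) *ᵥ x = (u ⬝ᵥ x)^2 := by
  simp only [Matrix.mulVec, dotProduct, Matrix.vecMulVec_apply, Finset.mul_sum,
    Finset.sum_mul, pow_two]
  rw [Finset.sum_comm]
  exact Finset.sum_congr rfl fun j _ => Finset.sum_congr rfl fun i _ => by ring

lemma quad_sum {α : Type*} {d : ℕ} (s : Finset α) (M : α → Matrix (Fin d) (Fin d) ℝ)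
    (x : Fin d → ℝ) :
    x ⬝ᵥ (∑ i ∈ s, M i) *ᵥ x = ∑ i ∈ s, x ⬝ᵥ (M i) *ᵥ x := by
  classical
  induction s using Finset.induction_on with
  | empty => simp
  | insert _ _ h ih =>
      rw [Finset.sum_insert h, Finset.sum_insert h, Matrix.add_mulVec, dotProduct_add, ih]

lemma sum_dotP {α : Type*} {d : ℕ} (s : Finset α) (v : α → Fin d → ℝ) (x : Fin d → ℝ) :
    (∑ i ∈ s, v i) ⬝ᵥ x = ∑ i ∈ s, v i ⬝ᵥ x := by
  classical
  induction s using Finset.induction_on with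
  | empty => simp
  | insert _ _ h ih =>
      rw [Finset.sum_insert h, Finset.sum_insert h, add_dotProduct, ih]

theorem wcov_S_le {d n : ℕ} (hn : 1 ≤ n) (X : Fin n → Fin d → ℝ)
    (α : ℝ) (hα : 0 < α) (hα' : α ≤ 1 / 2)
    (S : Finset (Fin n)) (hScard : (S.card : ℝ) = α * n)
    (μstar : Fin d → ℝ)
    (hA : ((1 : Matrix (Fin d) (Fin d) ℝ) -
      (S.card : ℝ)⁻¹ • ∑ i ∈ S, Matrix.vecMulVec (X i - μstar) (X i - μstar)).PosSemidef)
    (w : Fin n → ℝ) (hw0 : ∀ i, 0 ≤ w i) (hw1 : ∀ i, w i ≤ 1 / n)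
    (hwsum : (∑ i, w i) ≤ 1)
    (hSpos : 0 < wsum w S) :
    ((α / wsum w S) • (1 : Matrix (Fin d) (Fin d) ℝ) - wcov X w S).PosSemidef := by
  set W := wsum w S with hW
  have hnpos : (0:ℝ) < n := by exact_mod_cast hn
  have hcardpos : (0:ℝ) < S.card := by rw [hScard]; positivity
  have hpsum : ∑ i ∈ S, w i / W = 1 := by
    rw [← Finset.sum_div, show (∑ i ∈ S, w i) = W from hW.symm]
    exact div_self (ne_of_gt hSpos)
  rw [Matrix.posSemidef_iff_dotProduct_mulVec]
  constructor
  · -- Hermitian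
    ext i j
    simp only [Matrix.conjTranspose_apply, Matrix.sub_apply, Matrix.smul_apply, star_trivial,
      wcov, Matrix.sum_apply, Matrix.vecMulVec_apply, Matrix.one_apply, smul_eq_mul]
    have : ∀ k ∈ S, w k / W * ((X k - wmean X w S) j * (X k - wmean X w S) i)
        = w k / W * ((X k - wmean X w S) i * (X k - wmean X w S) j) := by
      intro k _; ring
    rw [Finset.sum_congr rfl this]
    by_cases hij : i = j <;> simp [hij, eq_comm, ← hW]
  · intro x
    rw [star_trivial]
    set μ := wmean X w S with hμ
    set b : Fin n → ℝ := fun i => (X i - μstar) ⬝ᵥ x with hb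
    set c : ℝ := (μ - μstar) ⬝ᵥ x with hc
    -- quadratic form of wcov
    have hqcov : x ⬝ᵥ (wcov X w S) *ᵥ x = ∑ i ∈ S, (w i / W) * (b i - c)^2 := by
      rw [wcov, quad_sum]
      refine Finset.sum_congr rfl fun i _ => ?_
      rw [Matrix.smul_mulVec, dotProduct_smul, smul_eq_mul, quad_vmv]
      congr 2
      have h2 : X i - μ = (X i - μstar) - (μ - μstar) := by abel
      rw [show wmean X w S = μ from hμ.symm, h2, sub_dotProduct]
    -- mean identity : ∑ p_i b_i = c
    have hmean : ∑ i ∈ S, (w i / W) * b i = c := by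
      have hμx : μ ⬝ᵥ x = ∑ i ∈ S, (w i / W) * (X i ⬝ᵥ x) := by
        rw [hμ, wmean, sum_dotP]
        exact Finset.sum_congr rfl fun i _ => by
          rw [smul_dotProduct, smul_eq_mul, hW]
      have : ∀ i ∈ S, (w i / W) * b i = (w i / W) * (X i ⬝ᵥ x) - (w i / W) * (μstar ⬝ᵥ x) := by
        intro i _
        show w i / W * ((X i - μstar) ⬝ᵥ x) = (w i / W) * (X i ⬝ᵥ x) - (w i / W) * (μstar ⬝ᵥ x)
        rw [sub_dotProduct]; ring
      rw [Finset.sum_congr rfl this, Finset.sum_sub_distrib, ← Finset.sum_mul, hpsum, one_mul,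
        ← hμx, hc, sub_dotProduct]
    -- from hA: ∑ b_i^2 ≤ card * (x ⬝ᵥ x)
    have hAx := hA.dotProduct_mulVec_nonneg x
    rw [star_trivial, Matrix.sub_mulVec, dotProduct_sub, Matrix.one_mulVec,
      Matrix.smul_mulVec, dotProduct_smul, smul_eq_mul, quad_sum, sub_nonneg] at hAx
    have hsum_b : ∑ i ∈ S, (b i)^2 ≤ (S.card : ℝ) * (x ⬝ᵥ x) := by
      have h1 : ∑ i ∈ S, x ⬝ᵥ (Matrix.vecMulVec (X i - μstar) (X i - μstar)) *ᵥ x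
          = ∑ i ∈ S, (b i)^2 :=
        Finset.sum_congr rfl fun i _ => quad_vmv _ _
      rw [h1] at hAx
      calc ∑ i ∈ S, (b i)^2 = (S.card : ℝ) * ((S.card : ℝ)⁻¹ * ∑ i ∈ S, (b i)^2) := by
            field_simp
        _ ≤ (S.card : ℝ) * (x ⬝ᵥ x) := by
            apply mul_le_mul_of_nonneg_left hAx (le_of_lt hcardpos)
    -- chain
    have step1 : ∑ i ∈ S, (w i / W) * (b i - c)^2 ≤ ∑ i ∈ S, (w i / W) * (b i)^2 := by
      have expand : ∀ i ∈ S, (w i / W) * (b i - c)^2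
          = (w i / W) * (b i)^2 - 2*c*((w i / W) * b i) + c^2 * (w i / W) := by
        intro i _; ring
      rw [Finset.sum_congr rfl expand, Finset.sum_add_distrib, Finset.sum_sub_distrib,
        ← Finset.mul_sum, ← Finset.mul_sum, hmean, hpsum, mul_one]
      nlinarith [sq_nonneg c]
    have step2 : ∑ i ∈ S, (w i / W) * (b i)^2 ≤ (1/(n*W)) * ∑ i ∈ S, (b i)^2 := by
      rw [Finset.mul_sum]
      refine Finset.sum_le_sum fun i _ => ?_
      have : w i / W ≤ 1/(n*W) := by
        rw [div_le_div_iff₀ hSpos (by positivity)]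
        calc w i * (n*W) = (w i * n) * W := by ring
          _ ≤ 1 * W := by
              apply mul_le_mul_of_nonneg_right _ (le_of_lt hSpos)
              calc w i * n ≤ (1/n) * n := by
                    exact mul_le_mul_of_nonneg_right (hw1 i) (le_of_lt hnpos)
                _ = 1 := by field_simp
          _ = 1 * W := rfl
      exact mul_le_mul_of_nonneg_right this (sq_nonneg _)
    have step3 : (1/(n*W)) * ∑ i ∈ S, (b i)^2 ≤ (α / W) * (x ⬝ᵥ x) := by
      calc (1/(n*W)) * ∑ i ∈ S, (b i)^2 ≤ (1/(n*W)) * ((S.card : ℝ) * (x ⬝ᵥ x)) := by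
            apply mul_le_mul_of_nonneg_left hsum_b (by positivity)
        _ = (α / W) * (x ⬝ᵥ x) := by
            rw [hScard]; field_simp
    -- assemble
    rw [Matrix.sub_mulVec, dotProduct_sub, Matrix.smul_mulVec,
      dotProduct_smul, Matrix.one_mulVec, smul_eq_mul, sub_nonneg, hqcov]
    calc ∑ i ∈ S, (w i / W) * (b i - c)^2 ≤ (1/(n*W)) * ∑ i ∈ S, (b i)^2 :=
          le_trans step1 step2
      _ ≤ (α / W) * (x ⬝ᵥ x) := step3
end

section
/- Let w ∈ ℝ^n be entrywise nonnegative with ∑_{i=1}^n w_i ≤ 1, ‖w_T‖₁ > 0 and ‖w_S‖₁ > 0. Then (μ_w(S) − μ_w(T))(μ_w(S) − μ_w(T))ᵀ ⪯ (‖w_T‖₁/‖w_S‖₁)·Cov_w(T) in the Loewner order. -/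
open Finset
open Matrix

lemma sum_mulVec' {ι d : ℕ} (s : Finset (Fin ι)) (M : Fin ι → Matrix (Fin d) (Fin d) ℝ)
    (x : Fin d → ℝ) : (∑ i ∈ s, M i) *ᵥ x = ∑ i ∈ s, M i *ᵥ x := by
  ext j
  simp [Matrix.mulVec, dotProduct, Matrix.sum_apply, Finset.sum_apply, Finset.sum_mul]
  rw [Finset.sum_comm]

lemma dotProduct_sum' {ι d : ℕ} (s : Finset (Fin ι)) (v : Fin ι → Fin d → ℝ)
    (x : Fin d → ℝ) : x ⬝ᵥ (∑ i ∈ s, v i) = ∑ i ∈ s, x ⬝ᵥ v i := by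
  simp [dotProduct, Finset.sum_apply, Finset.mul_sum]
  rw [Finset.sum_comm]

lemma quad_vecMulVec {d : ℕ} (u x : Fin d → ℝ) :
    x ⬝ᵥ (Matrix.vecMulVec u u *ᵥ x) = (u ⬝ᵥ x)^2 := by
  simp [Matrix.vecMulVec, Matrix.mulVec, dotProduct, Finset.mul_sum, Finset.sum_mul,
    pow_two, mul_comm, mul_left_comm]

lemma sum_dotProduct' {ι d : ℕ} (s : Finset (Fin ι)) (v : Fin ι → Fin d → ℝ)
    (x : Fin d → ℝ) : (∑ i ∈ s, v i) ⬝ᵥ x = ∑ i ∈ s, v i ⬝ᵥ x := by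
  simp [dotProduct, Finset.sum_apply, Finset.sum_mul]
  rw [Finset.sum_comm]

theorem mean_diff_outer_le_wcov {d n : ℕ} (hn : 1 ≤ n) (X : Fin n → Fin d → ℝ)
    (S : Finset (Fin n))
    (w : Fin n → ℝ) (hw0 : ∀ i, 0 ≤ w i) (hwsum : (∑ i, w i) ≤ 1)
    (hTpos : 0 < wsum w Finset.univ) (hSpos : 0 < wsum w S) :
    ((wsum w Finset.univ / wsum w S) • wcov X w Finset.univ -
      Matrix.vecMulVec (wmean X w S - wmean X w Finset.univ)
        (wmean X w S - wmean X w Finset.univ)).PosSemidef := by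
  set T : ℝ := wsum w Finset.univ with hT
  set Sv : ℝ := wsum w S with hS
  set μ : Fin d → ℝ := wmean X w Finset.univ with hμ
  -- the mean difference as a weighted combination
  have hmean : wmean X w S - μ = ∑ i ∈ S, (w i / Sv) • (X i - μ) := by
    have h1 : (∑ i ∈ S, w i / Sv) = 1 := by
      rw [← Finset.sum_div, show (∑ i ∈ S, w i) = Sv from rfl, div_self hSpos.ne']
    calc wmean X w S - μ = (∑ i ∈ S, (w i / Sv) • X i) - (∑ i ∈ S, w i / Sv) • μ := by
          rw [h1, one_smul]; rfl
      _ = ∑ i ∈ S, (w i / Sv) • (X i - μ) := by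
          rw [Finset.sum_smul, ← Finset.sum_sub_distrib]
          simp [smul_sub]
  refine Matrix.posSemidef_iff_dotProduct_mulVec.mpr ⟨?_, ?_⟩
  · -- Hermitian
    show _ᴴ = _
    ext i j
    simp only [Matrix.conjTranspose_apply, star_trivial, Matrix.sub_apply, Matrix.smul_apply,
      wcov, Matrix.sum_apply, Matrix.vecMulVec_apply, smul_eq_mul]
    congr 1
    · exact congrArg _ (Finset.sum_congr rfl fun k _ => by ring)
    · ring
  · intro x
    simp only [star_trivial]
    -- compute the quadratic form
    set c : Fin n → ℝ := fun i => (X i - μ) ⬝ᵥ x with hc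
    have hquad : x ⬝ᵥ (wcov X w Finset.univ *ᵥ x) = ∑ i, (w i / T) * (c i)^2 := by
      rw [wcov, sum_mulVec', dotProduct_sum']
      refine Finset.sum_congr rfl fun i _ => ?_
      rw [Matrix.smul_mulVec, dotProduct_smul, quad_vecMulVec]
      simp [hc, smul_eq_mul]
      rfl
    have hm : (wmean X w S - μ) ⬝ᵥ x = ∑ i ∈ S, (w i / Sv) * c i := by
      rw [hmean, sum_dotProduct']
      refine Finset.sum_congr rfl fun i _ => ?_
      rw [smul_dotProduct]
      simp [hc, smul_eq_mul]
    rw [Matrix.sub_mulVec, dotProduct_sub, Matrix.smul_mulVec,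
      dotProduct_smul, hquad, quad_vecMulVec, hm, sub_nonneg, smul_eq_mul]
    -- Cauchy-Schwarz step
    have hCS : (∑ i ∈ S, (w i / Sv) * c i)^2 ≤ ∑ i ∈ S, (w i / Sv) * (c i)^2 := by
      have := Finset.sum_mul_sq_le_sq_mul_sq S (fun i => Real.sqrt (w i / Sv))
        (fun i => Real.sqrt (w i / Sv) * c i)
      have h1 : (∑ i ∈ S, Real.sqrt (w i / Sv) ^ 2) = 1 := by
        rw [show (∑ i ∈ S, Real.sqrt (w i / Sv) ^ 2) = ∑ i ∈ S, w i / Sv from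
          Finset.sum_congr rfl fun i _ => Real.sq_sqrt (div_nonneg (hw0 i) hSpos.le)]
        rw [← Finset.sum_div, show (∑ i ∈ S, w i) = Sv from rfl, div_self hSpos.ne']
      calc (∑ i ∈ S, (w i / Sv) * c i)^2
          = (∑ i ∈ S, Real.sqrt (w i / Sv) * (Real.sqrt (w i / Sv) * c i))^2 := by
            congr 1; refine Finset.sum_congr rfl fun i _ => ?_
            rw [← mul_assoc, Real.mul_self_sqrt (div_nonneg (hw0 i) hSpos.le)]
        _ ≤ (∑ i ∈ S, Real.sqrt (w i / Sv) ^ 2) * ∑ i ∈ S, (Real.sqrt (w i / Sv) * c i)^2 := this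
        _ = ∑ i ∈ S, (w i / Sv) * (c i)^2 := by
            rw [h1, one_mul]
            refine Finset.sum_congr rfl fun i _ => ?_
            rw [mul_pow, Real.sq_sqrt (div_nonneg (hw0 i) hSpos.le)]
    have hsub : ∑ i ∈ S, (w i / Sv) * (c i)^2 ≤ ∑ i, (w i / Sv) * (c i)^2 :=
      Finset.sum_le_sum_of_subset_of_nonneg (Finset.subset_univ S)
        (fun i _ _ => mul_nonneg (div_nonneg (hw0 i) hSpos.le) (sq_nonneg _))
    have heq : (∑ i, (w i / Sv) * (c i)^2) = T / Sv * ∑ i, (w i / T) * (c i)^2 := by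
      rw [Finset.mul_sum]
      refine Finset.sum_congr rfl fun i _ => ?_
      field_simp [hTpos.ne', hSpos.ne']
    calc (∑ i ∈ S, (w i / Sv) * c i)^2
        = (∑ i ∈ S, (w i / Sv) * c i)^2 := rfl
      _ ≤ ∑ i ∈ S, (w i / Sv) * (c i)^2 := hCS
      _ ≤ ∑ i, (w i / Sv) * (c i)^2 := hsub
      _ = T / Sv * ∑ i, (w i / T) * (c i)^2 := heq
end

section
/- Consider the updates: for each 0 ≤ s < t, let τ^(s) ∈ ℝ^n be entrywise nonnegative scores that are safe with respect to w^(s), assume ‖w^(s)_T‖₁ > 0, ‖w^(s)_S‖₁ > 0 and τ^(s)_max := max{ τ^(s)_i : i with w^(s)_i ≠ 0 } > 0, and set w^(s+1)_i := (1 − τ^(s)_i/τ^(s)_max)·w^(s)_i for every i. If ‖w^(t)_T‖₁ ≥ (1/2)·‖w^(0)_T‖₁, then ‖w^(t)_S‖₁ ≥ (1/√2)·‖w^(0)_S‖₁. -/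
open Finset

/-- If safe downweighting has removed at most half the total weight,
then at most a `1/√2` fraction of the weight on `S` has been removed. -/
theorem wsum_S_stable_of_safe_downweighting {n : ℕ} (hn : 1 ≤ n)
    (S : Finset (Fin n)) (t : ℕ)
    (w : ℕ → Fin n → ℝ) (τ : ℕ → Fin n → ℝ) (τmax : ℕ → ℝ)
    (hw0nn : ∀ i, 0 ≤ w 0 i) (hw0sum : (∑ i, w 0 i) ≤ 1)
    (hτnn : ∀ s, s < t → ∀ i, 0 ≤ τ s i)
    (hsafe : ∀ s, s < t → Safe S (w s) (τ s))
    (hTpos : ∀ s, s < t → 0 < wsum (w s) Finset.univ)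
    (hSpos : ∀ s, s < t → 0 < wsum (w s) S)
    (hmax : ∀ s, s < t → IsGreatest {x : ℝ | ∃ i, w s i ≠ 0 ∧ x = τ s i} (τmax s))
    (hmaxpos : ∀ s, s < t → 0 < τmax s)
    (hupd : ∀ s, s < t → ∀ i, w (s + 1) i = (1 - τ s i / τmax s) * w s i)
    (hhalf : (1 / 2) * wsum (w 0) Finset.univ ≤ wsum (w t) Finset.univ) :
    (1 / Real.sqrt 2) * wsum (w 0) S ≤ wsum (w t) S := by
  -- weights stay nonnegative
  have hwnn : ∀ s, s ≤ t → ∀ i, 0 ≤ w s i := by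
    intro s
    induction s with
    | zero => intro _ i; exact hw0nn i
    | succ s ih =>
      intro hs i
      have hs' : s < t := lt_of_lt_of_le (Nat.lt_succ_self s) hs
      rw [hupd s hs' i]
      by_cases h : w s i = 0
      · simp [h]
      · have hτle : τ s i ≤ τmax s := (hmax s hs').2 ⟨i, h, rfl⟩
        have h1 : τ s i / τmax s ≤ 1 := (div_le_one (hmaxpos s hs')).2 hτle
        have : 0 ≤ 1 - τ s i / τmax s := by linarith
        exact mul_nonneg this (ih (le_of_lt hs') i)
  have hWnn : ∀ s, s ≤ t → 0 ≤ wsum (w s) Finset.univ := by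
    intro s hs
    exact Finset.sum_nonneg fun i _ => hwnn s hs i
  have hVnn : ∀ s, s ≤ t → 0 ≤ wsum (w s) S := by
    intro s hs
    exact Finset.sum_nonneg fun i _ => hwnn s hs i
  -- main invariant
  have key : ∀ s, s ≤ t →
      wsum (w 0) S * Real.sqrt (wsum (w s) Finset.univ) ≤
        wsum (w s) S * Real.sqrt (wsum (w 0) Finset.univ) := by
    intro s
    induction s with
    | zero => intro _; exact le_of_eq rfl
    | succ s ih =>
      intro hs
      have hs' : s < t := lt_of_lt_of_le (Nat.lt_succ_self s) hs
      set W := wsum (w s) Finset.univ with hWdef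
      set W' := wsum (w (s + 1)) Finset.univ with hW'def
      set V := wsum (w s) S with hVdef
      set V' := wsum (w (s + 1)) S with hV'def
      set A : ℝ := ∑ i ∈ S, w s i * τ s i with hAdef
      set B : ℝ := ∑ i, w s i * τ s i with hBdef
      have hτm := hmaxpos s hs'
      have hWpos := hTpos s hs'
      have hVpos := hSpos s hs'
      have hW'eq : W' = W - B / τmax s := by
        simp only [hW'def, hBdef, hWdef, wsum, Finset.sum_div, ← Finset.sum_sub_distrib]
        apply Finset.sum_congr rfl
        intro i _
        rw [hupd s hs' i]
        field_simp
      have hV'eq : V' = V - A / τmax s := by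
        simp only [hV'def, hAdef, hVdef, wsum, Finset.sum_div, ← Finset.sum_sub_distrib]
        apply Finset.sum_congr rfl
        intro i _
        rw [hupd s hs' i]
        field_simp
      -- safety gives 2 * W * A ≤ V * B
      have hsafe' := hsafe s hs'
      unfold Safe at hsafe'
      have hsA : ∑ i ∈ S, (w s i / wsum (w s) S) * τ s i = A / V := by
        rw [hAdef, Finset.sum_div]
        apply Finset.sum_congr rfl
        intro i _
        rw [← hVdef]
        ring
      have hsB : ∑ i, (w s i / wsum (w s) Finset.univ) * τ s i = B / W := by
        rw [hBdef, Finset.sum_div]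
        apply Finset.sum_congr rfl
        intro i _
        rw [← hWdef]
        ring
      rw [hsA, hsB] at hsafe'
      have hkey : 2 * W * A ≤ V * B := by
        have hrw : (1 : ℝ) / 2 * (B / W) = B / (2 * W) := by ring
        rw [hrw, div_le_div_iff₀ hVpos (by positivity)] at hsafe'
        linarith
      -- 2 * W * V' ≥ V * (W + W')
      have hlin : V * (W + W') ≤ 2 * W * V' := by
        have hdiv : 2 * W * (A / τmax s) ≤ V * (B / τmax s) := by
          rw [← mul_div_assoc, ← mul_div_assoc]
          exact (div_le_div_iff_of_pos_right hτm).2 hkey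
        have hAB : A / τmax s = V - V' := by rw [hV'eq]; ring
        have hBB : B / τmax s = W - W' := by rw [hW'eq]; ring
        rw [hAB, hBB] at hdiv
        nlinarith
      -- AM-GM step: V' * sqrt W ≥ V * sqrt W'
      have hW'nn : 0 ≤ W' := hWnn (s + 1) hs
      have ha : Real.sqrt W ^ 2 = W := Real.sq_sqrt hWpos.le
      have hb : Real.sqrt W' ^ 2 = W' := Real.sq_sqrt hW'nn
      have hapos : 0 < Real.sqrt W := Real.sqrt_pos.2 hWpos
      have hbnn : 0 ≤ Real.sqrt W' := Real.sqrt_nonneg _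
      have hstep : V * Real.sqrt W' ≤ V' * Real.sqrt W := by
        nlinarith [sq_nonneg (Real.sqrt W - Real.sqrt W'), mul_pos hVpos hapos,
          mul_nonneg hVpos.le hbnn]
      -- combine with ih
      have ih' := ih hs'.le
      set c := Real.sqrt (wsum (w 0) Finset.univ) with hcdef
      have hcnn : 0 ≤ c := Real.sqrt_nonneg _
      have h2 : wsum (w 0) S * Real.sqrt W' * Real.sqrt W ≤ V' * c * Real.sqrt W := by
        calc wsum (w 0) S * Real.sqrt W' * Real.sqrt W
            = (wsum (w 0) S * Real.sqrt W) * Real.sqrt W' := by ring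
          _ ≤ (V * c) * Real.sqrt W' := mul_le_mul_of_nonneg_right ih' hbnn
          _ = (V * Real.sqrt W') * c := by ring
          _ ≤ (V' * Real.sqrt W) * c := mul_le_mul_of_nonneg_right hstep hcnn
          _ = V' * c * Real.sqrt W := by ring
      exact le_of_mul_le_mul_right h2 hapos
  -- conclude
  rcases Nat.eq_zero_or_pos t with ht0 | htpos
  · subst ht0
    have hV0 : 0 ≤ wsum (w 0) S := hVnn 0 le_rfl
    have : (1 : ℝ) / Real.sqrt 2 ≤ 1 := by
      rw [div_le_one (by positivity)]
      nlinarith [Real.sq_sqrt (by norm_num : (2:ℝ) ≥ 0), Real.sqrt_nonneg 2]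
    nlinarith
  · have hW0pos := hTpos 0 htpos
    have hkey := key t le_rfl
    have hsq : Real.sqrt (wsum (w 0) Finset.univ) / Real.sqrt 2 ≤
        Real.sqrt (wsum (w t) Finset.univ) := by
      rw [← Real.sqrt_div hW0pos.le]
      apply Real.sqrt_le_sqrt
      linarith
    have hV0nn : 0 ≤ wsum (w 0) S := hVnn 0 (Nat.zero_le t)
    have hcpos : 0 < Real.sqrt (wsum (w 0) Finset.univ) := Real.sqrt_pos.2 hW0pos
    have h2 : (1 / Real.sqrt 2) * wsum (w 0) S * Real.sqrt (wsum (w 0) Finset.univ) ≤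
        wsum (w t) S * Real.sqrt (wsum (w 0) Finset.univ) := by
      calc (1 / Real.sqrt 2) * wsum (w 0) S * Real.sqrt (wsum (w 0) Finset.univ)
          = wsum (w 0) S * (Real.sqrt (wsum (w 0) Finset.univ) / Real.sqrt 2) := by ring
        _ ≤ wsum (w 0) S * Real.sqrt (wsum (w t) Finset.univ) :=
            mul_le_mul_of_nonneg_left hsq hV0nn
        _ ≤ wsum (w t) S * Real.sqrt (wsum (w 0) Finset.univ) := hkey
    exact le_of_mul_le_mul_right h2 hcpos
end

section
/- Let s ∈ ℝ^d, and suppose the set { τ > 0 : exp(τ) ≤ (1/k)·∑_{j=1}^d exp(min(τ, s_j)) } is nonempty; let τ(s) denote its maximum (which is attained). Then the function r*_vec : ℝ^d → ℝ is twice differentiable at s if and only if no coordinate of s is equal to τ(s). -/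
open Finset

/-- The vector `k`-Fantope: `y ∈ ℝ^d` with `0 ≤ y_j ≤ 1` and `∑_j y_j = k`. -/
def fantopeVec (d k : ℕ) : Set (EuclideanSpace ℝ (Fin d)) :=
  {y | (∀ j, 0 ≤ y j ∧ y j ≤ 1) ∧ (∑ j, y j) = (k : ℝ)}

/-- The vector entropy regularizer `r_vec(y) = ∑_j (y_j·log y_j − y_j)`
(with `0 · log 0 = 0`, as in `Real.log 0 = 0`). -/
noncomputable def rVec {d : ℕ} (y : EuclideanSpace ℝ (Fin d)) : ℝ :=
  ∑ j, (y j * Real.log (y j) - y j)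

/-- `r*_vec(s) = max_{y ∈ 𝒴_vec} (⟨s, y⟩ − r_vec(y))`. -/
noncomputable def rStarVec (d k : ℕ) (s : EuclideanSpace ℝ (Fin d)) : ℝ :=
  sSup ((fun y => (∑ j, s j * y j) - rVec y) '' fantopeVec d k)

namespace RSV

variable {d k : ℕ}

noncomputable def hfun (s : EuclideanSpace ℝ (Fin d)) (t : ℝ) : ℝ :=
  ∑ j, Real.exp (min 0 (s j - t))

lemma key_ineq (u y : ℝ) (h0 : 0 ≤ y) (h1 : y ≤ 1) :
    u * y - (y * Real.log y - y) ≤ Real.exp (min 0 u) + max 0 u := by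
  rcases eq_or_lt_of_le h0 with h | hy
  · simp [← h]
    positivity
  · have claim1 : u * y - (y * Real.log y - y) ≤ Real.exp u := by
      have h := Real.add_one_le_exp (u - Real.log y)
      have : y * (u - Real.log y + 1) ≤ y * Real.exp (u - Real.log y) := by
        apply mul_le_mul_of_nonneg_left h h0
      rw [Real.exp_sub, Real.exp_log hy] at this
      have hy' : y * (Real.exp u / y) = Real.exp u := by field_simp
      nlinarith
    rcases le_or_gt u 0 with hu | hu
    · rw [min_eq_right hu, max_eq_left hu]
      linarith [claim1]
    · rw [min_eq_left hu.le, max_eq_right hu.le]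
      have hlog : Real.log (1/y) ≤ 1/y - 1 := Real.log_le_sub_one_of_pos (by positivity)
      rw [Real.log_div one_ne_zero (ne_of_gt hy), Real.log_one] at hlog
      have h2 : y * (0 - Real.log y) ≤ y * (1/y - 1) := mul_le_mul_of_nonneg_left hlog h0
      have h3 : y * (1/y - 1) = 1 - y := by field_simp
      rw [Real.exp_zero]
      nlinarith [mul_le_mul_of_nonneg_right h1 hu.le]

lemma value_le (s : EuclideanSpace ℝ (Fin d)) (t : ℝ) {y : EuclideanSpace ℝ (Fin d)}
    (hy : y ∈ fantopeVec d k) :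
    (∑ j, s j * y j) - rVec y ≤
      (k : ℝ) * t + ∑ j, (Real.exp (min 0 (s j - t)) + max 0 (s j - t)) := by
  obtain ⟨hb, hsum⟩ := hy
  have key : ∀ j : Fin d, (s j - t) * y j - (y j * Real.log (y j) - y j) ≤
      Real.exp (min 0 (s j - t)) + max 0 (s j - t) := fun j =>
    key_ineq _ _ (hb j).1 (hb j).2
  have hsumle := Finset.sum_le_sum (fun j (_ : j ∈ Finset.univ) => key j)
  have expand : (∑ j, s j * y j) - rVec y =
      (∑ j, ((s j - t) * y j - (y j * Real.log (y j) - y j))) + (k : ℝ) * t := by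
    rw [rVec, ← hsum, ← Finset.sum_sub_distrib, Finset.sum_mul, ← Finset.sum_add_distrib]
    exact Finset.sum_congr rfl (fun j _ => by ring)
  rw [expand]
  linarith

noncomputable def yOfT (s : EuclideanSpace ℝ (Fin d)) (t : ℝ) : EuclideanSpace ℝ (Fin d) :=
  WithLp.toLp 2 (fun j => Real.exp (min 0 (s j - t)))

lemma yOfT_mem (s : EuclideanSpace ℝ (Fin d)) (t : ℝ) (hroot : hfun s t = (k : ℝ)) :
    yOfT s t ∈ fantopeVec d k := by
  refine ⟨fun j => ⟨(Real.exp_pos _).le, Real.exp_le_one_iff.2 (min_le_left _ _)⟩, hroot⟩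

lemma yOfT_value (s : EuclideanSpace ℝ (Fin d)) (t : ℝ) (hroot : hfun s t = (k : ℝ)) :
    (∑ j, s j * yOfT s t j) - rVec (yOfT s t) =
      (k : ℝ) * t + ∑ j, (Real.exp (min 0 (s j - t)) + max 0 (s j - t)) := by
  have hterm : ∀ j : Fin d,
      s j * yOfT s t j - (yOfT s t j * Real.log (yOfT s t j) - yOfT s t j) =
      t * Real.exp (min 0 (s j - t)) + (Real.exp (min 0 (s j - t)) + max 0 (s j - t)) := by
    intro j
    have hlog : Real.log (yOfT s t j) = min 0 (s j - t) := Real.log_exp _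
    have hminmax : min 0 (s j - t) + max 0 (s j - t) = s j - t := (min_add_max 0 (s j - t)).trans (zero_add _)
    rcases le_or_gt (s j - t) 0 with h | h
    · have h1 : min 0 (s j - t) = s j - t := min_eq_right h
      have h2 : max 0 (s j - t) = 0 := max_eq_left h
      simp only [yOfT, WithLp.ofLp_toLp] at *
      rw [hlog, h1, h2]
      ring
    · have h1 : min 0 (s j - t) = 0 := min_eq_left h.le
      have h2 : max 0 (s j - t) = s j - t := max_eq_right h.le
      simp only [yOfT, WithLp.ofLp_toLp] at *
      rw [hlog, h1, h2, Real.exp_zero]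
      ring
  have : (∑ j, s j * yOfT s t j) - rVec (yOfT s t) =
      ∑ j, (s j * yOfT s t j - (yOfT s t j * Real.log (yOfT s t j) - yOfT s t j)) := by
    rw [rVec, ← Finset.sum_sub_distrib]
  rw [this]
  have := Finset.sum_congr rfl (fun j (_ : j ∈ Finset.univ) => hterm j)
  rw [this, Finset.sum_add_distrib, ← Finset.mul_sum]
  have : ∑ j, Real.exp (min 0 (s j - t)) = (k : ℝ) := hroot
  rw [this]
  ring

lemma bddAbove_rStar (s : EuclideanSpace ℝ (Fin d)) :
    BddAbove ((fun y => (∑ j, s j * y j) - rVec y) '' fantopeVec d k) := by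
  refine ⟨(k : ℝ) * 0 + ∑ j, (Real.exp (min 0 (s j - 0)) + max 0 (s j - 0)), ?_⟩
  rintro x ⟨y, hy, rfl⟩
  exact value_le s 0 hy

lemma rStarVec_ge (s : EuclideanSpace ℝ (Fin d)) {y : EuclideanSpace ℝ (Fin d)}
    (hy : y ∈ fantopeVec d k) :
    (∑ j, s j * y j) - rVec y ≤ rStarVec d k s :=
  le_csSup (bddAbove_rStar s) ⟨y, hy, rfl⟩

lemma rStarVec_eq (s : EuclideanSpace ℝ (Fin d)) (t : ℝ) (hroot : hfun s t = (k : ℝ)) :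
    rStarVec d k s = (k : ℝ) * t + ∑ j, (Real.exp (min 0 (s j - t)) + max 0 (s j - t)) := by
  apply le_antisymm
  · apply csSup_le ⟨_, Set.mem_image_of_mem _ (yOfT_mem s t hroot)⟩
    rintro x ⟨y, hy, rfl⟩
    exact value_le s t hy
  · rw [← yOfT_value s t hroot]
    exact rStarVec_ge s (yOfT_mem s t hroot)





lemma hfun_continuous (s : EuclideanSpace ℝ (Fin d)) : Continuous (hfun s) := by
  apply continuous_finset_sum
  intro j _
  exact Real.continuous_exp.comp (continuous_const.min (continuous_const.sub continuous_id))

lemma hfun_antitone (s : EuclideanSpace ℝ (Fin d)) : Antitone (hfun s) := by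
  intro a b hab
  apply Finset.sum_le_sum
  intro j _
  exact Real.exp_le_exp.2 (min_le_min le_rfl (by linarith))

lemma hfun_exists_root (hk1 : 1 ≤ k) (hkd : k < d) (s : EuclideanSpace ℝ (Fin d)) :
    ∃ t, hfun s t = (k : ℝ) := by
  have hd : 0 < d := lt_of_le_of_lt (Nat.zero_le k) hkd
  have hne : (Finset.univ : Finset (Fin d)).Nonempty := univ_nonempty_iff.2 ⟨⟨0, hd⟩⟩
  set t₀ := univ.inf' hne s with ht₀
  set t₁ := univ.sup' hne s + Real.log d with ht₁
  have hlogd : 0 ≤ Real.log d := Real.log_nonneg (by exact_mod_cast Nat.one_le_iff_ne_zero.2 hd.ne')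
  have h01 : t₀ ≤ t₁ := by
    have j0 : Fin d := ⟨0, hd⟩
    have a1 : t₀ ≤ s j0 := Finset.inf'_le _ (mem_univ j0)
    have a2 : s j0 ≤ univ.sup' hne s := Finset.le_sup' _ (mem_univ j0)
    rw [ht₁]; linarith
  have hv0 : hfun s t₀ = (d : ℝ) := by
    have : ∀ j : Fin d, Real.exp (min 0 (s j - t₀)) = 1 := by
      intro j
      have : t₀ ≤ s j := Finset.inf'_le _ (mem_univ j)
      rw [min_eq_left (by linarith), Real.exp_zero]
    simp [hfun, this]
  have hv1 : hfun s t₁ ≤ 1 := by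
    have hterm : ∀ j : Fin d, Real.exp (min 0 (s j - t₁)) ≤ 1 / d := by
      intro j
      have hj : s j ≤ univ.sup' hne s := Finset.le_sup' _ (mem_univ j)
      have : min 0 (s j - t₁) ≤ -Real.log d := by
        apply min_le_of_right_le; rw [ht₁]; linarith
      calc Real.exp (min 0 (s j - t₁)) ≤ Real.exp (-Real.log d) := Real.exp_le_exp.2 this
        _ = 1 / d := by
          rw [Real.exp_neg, Real.exp_log (by exact_mod_cast hd)]
          exact (one_div _).symm
    calc hfun s t₁ ≤ ∑ _j : Fin d, (1:ℝ)/d := Finset.sum_le_sum (fun j _ => hterm j)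
      _ = 1 := by
        rw [Finset.sum_const, card_univ, Fintype.card_fin, nsmul_eq_mul]
        field_simp
  have hk' : (k : ℝ) ∈ Set.Icc (hfun s t₁) (hfun s t₀) := by
    constructor
    · calc hfun s t₁ ≤ 1 := hv1
        _ ≤ (k : ℝ) := by exact_mod_cast hk1
    · rw [hv0]; exact_mod_cast hkd.le
  have := intermediate_value_Icc' h01 (hfun_continuous s).continuousOn hk'
  obtain ⟨t, _, ht⟩ := this
  exact ⟨t, ht⟩

lemma root_le (hkd : k < d) {s s' : EuclideanSpace ℝ (Fin d)} {t t' δ : ℝ} (hδ : 0 ≤ δ)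
    (ht : hfun s t = (k : ℝ)) (ht' : hfun s' t' = (k : ℝ)) (hss : ∀ j, s' j ≤ s j + δ) :
    t' ≤ t + δ := by
  by_contra hcon
  push_neg at hcon
  have h1 : hfun s' (t + δ) ≤ (k : ℝ) := by
    rw [← ht]
    apply Finset.sum_le_sum
    intro j _
    exact Real.exp_le_exp.2 (min_le_min le_rfl (by linarith [hss j]))
  obtain ⟨j0, hj0⟩ : ∃ j, s' j < t' := by
    by_contra hall
    push_neg at hall
    have : hfun s' t' = (d : ℝ) := by
      have : ∀ j : Fin d, Real.exp (min 0 (s' j - t')) = 1 := fun j => by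
        rw [min_eq_left (by linarith [hall j]), Real.exp_zero]
      simp [hfun, this]
    rw [ht'] at this
    exact absurd (Nat.cast_injective this) hkd.ne
  set t₂ := max (t + δ) (s' j0) with ht₂
  have h2a : t₂ < t' := max_lt hcon hj0
  have h2b : t + δ ≤ t₂ := le_max_left _ _
  have hle : hfun s' t₂ ≤ (k : ℝ) := le_trans (hfun_antitone s' h2b) h1
  have hlt : hfun s' t' < hfun s' t₂ := by
    apply Finset.sum_lt_sum
    · intro j _
      exact Real.exp_le_exp.2 (min_le_min le_rfl (by linarith [h2a.le]))
    · refine ⟨j0, mem_univ j0, ?_⟩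
      apply Real.exp_lt_exp.2
      have hj2 : s' j0 ≤ t₂ := le_max_right _ _
      rw [min_eq_right (by linarith), min_eq_right (by linarith)]
      linarith
  rw [ht'] at hlt
  linarith

noncomputable def tauOf (k : ℕ) (s : EuclideanSpace ℝ (Fin d)) : ℝ :=
  @dite _ (∃ t, hfun s t = (k : ℝ)) (Classical.dec _) (fun h => h.choose) (fun _ => 0)

lemma tauOf_spec (hk1 : 1 ≤ k) (hkd : k < d) (s : EuclideanSpace ℝ (Fin d)) :
    hfun s (tauOf k s) = (k : ℝ) := by
  rw [tauOf, dif_pos (hfun_exists_root hk1 hkd s)]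
  exact (hfun_exists_root hk1 hkd s).choose_spec

lemma tauOf_unique (hk1 : 1 ≤ k) (hkd : k < d) {s : EuclideanSpace ℝ (Fin d)} {t : ℝ}
    (ht : hfun s t = (k : ℝ)) : tauOf k s = t := by
  have h1 := root_le hkd le_rfl (tauOf_spec hk1 hkd s) ht (fun j => by linarith)
  have h2 := root_le hkd le_rfl ht (tauOf_spec hk1 hkd s) (fun j => by linarith)
  simp only [add_zero] at h1 h2
  linarith

lemma tauOf_lipschitz (hk1 : 1 ≤ k) (hkd : k < d) {s s' : EuclideanSpace ℝ (Fin d)} {δ : ℝ}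
    (hδ : 0 ≤ δ) (h : ∀ j, |s' j - s j| ≤ δ) :
    |tauOf k s' - tauOf k s| ≤ δ := by
  have h1 := root_le hkd hδ (tauOf_spec hk1 hkd s) (tauOf_spec hk1 hkd s')
    (fun j => by have := h j; rw [abs_le] at this; linarith [this.2])
  have h2 := root_le hkd hδ (tauOf_spec hk1 hkd s') (tauOf_spec hk1 hkd s)
    (fun j => by have := h j; rw [abs_le] at this; linarith [this.1])
  rw [abs_le]
  constructor <;> linarith




lemma coord_le_norm (x : EuclideanSpace ℝ (Fin d)) (j : Fin d) : |x j| ≤ ‖x‖ := by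
  rw [EuclideanSpace.norm_eq, ← Real.sqrt_sq_eq_abs]
  apply Real.sqrt_le_sqrt
  calc x j ^ 2 = ‖x j‖ ^ 2 := by rw [Real.norm_eq_abs, sq_abs]
    _ ≤ ∑ i, ‖x i‖ ^ 2 :=
      Finset.single_le_sum (f := fun i => ‖x i‖ ^ 2) (fun i _ => sq_nonneg _) (mem_univ j)

lemma min_zero_lip (a b : ℝ) : |min 0 a - min 0 b| ≤ |a - b| := by
  have key : ∀ x : ℝ, min 0 x = (x - |x|) / 2 := by
    intro x
    rcases le_total 0 x with h | h
    · rw [min_eq_left h, abs_of_nonneg h]; ring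
    · rw [min_eq_right h, abs_of_nonpos h]; ring
  rw [key, key]
  have h1 : |a| - |b| ≤ |a - b| := abs_sub_abs_le_abs_sub a b
  have h2 : |b| - |a| ≤ |a - b| := by
    rw [abs_sub_comm]; exact abs_sub_abs_le_abs_sub b a
  rw [abs_le]
  have h3 : -(|a - b|) ≤ a - b := neg_abs_le _
  have h4 : a - b ≤ |a - b| := le_abs_self _
  constructor <;> linarith

lemma exp_lip_of_nonpos {a b : ℝ} (ha : a ≤ 0) (hb : b ≤ 0) :
    |Real.exp a - Real.exp b| ≤ |a - b| := by
  have key : ∀ x y : ℝ, x ≤ y → y ≤ 0 → Real.exp y - Real.exp x ≤ y - x := by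
    intro x y hxy hy
    have h1 : 1 - (y - x) ≤ Real.exp (-(y - x)) := by
      have := Real.add_one_le_exp (-(y - x)); linarith
    have h2 : Real.exp y * (1 - (y - x)) ≤ Real.exp y * Real.exp (-(y - x)) :=
      mul_le_mul_of_nonneg_left h1 (Real.exp_pos _).le
    rw [← Real.exp_add] at h2
    have h3 : Real.exp (y + -(y - x)) = Real.exp x := by ring_nf
    rw [h3] at h2
    have h4 : Real.exp y ≤ 1 := Real.exp_le_one_iff.2 hy
    nlinarith [Real.exp_pos y, (y - x), sub_nonneg.2 hxy]
  rcases le_total a b with h | h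
  · rw [abs_sub_comm, abs_of_nonneg (by linarith [Real.exp_le_exp.2 h] : (0:ℝ) ≤ Real.exp b - Real.exp a),
      abs_sub_comm, abs_of_nonneg (by linarith : (0:ℝ) ≤ b - a)]
    exact key a b h hb
  · rw [abs_of_nonneg (by linarith [Real.exp_le_exp.2 h] : (0:ℝ) ≤ Real.exp a - Real.exp b),
      abs_of_nonneg (by linarith : (0:ℝ) ≤ a - b)]
    exact key b a h ha


lemma rStar_eq_val (hk1 : 1 ≤ k) (hkd : k < d) (s : EuclideanSpace ℝ (Fin d)) :
    rStarVec d k s =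
      (∑ j, s j * yOfT s (tauOf k s) j) - rVec (yOfT s (tauOf k s)) :=
  (rStarVec_eq s _ (tauOf_spec hk1 hkd s)).trans (yOfT_value s _ (tauOf_spec hk1 hkd s)).symm

lemma y_close (hk1 : 1 ≤ k) (hkd : k < d) (s h : EuclideanSpace ℝ (Fin d)) (j : Fin d) :
    |yOfT (s + h) (tauOf k (s + h)) j - yOfT s (tauOf k s) j| ≤ 2 * ‖h‖ := by
  have htau : |tauOf k (s + h) - tauOf k s| ≤ ‖h‖ := by
    apply tauOf_lipschitz hk1 hkd (norm_nonneg h)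
    intro j'
    have : (s + h) j' - s j' = h j' := by
      show s j' + h j' - s j' = h j'; ring
    rw [this]
    exact coord_le_norm h j'
  have hcoord : |(s + h) j - s j| = |h j| := by
    congr 1; show s j + h j - s j = h j; ring
  calc |yOfT (s + h) (tauOf k (s + h)) j - yOfT s (tauOf k s) j|
      ≤ |min 0 ((s + h) j - tauOf k (s + h)) - min 0 (s j - tauOf k s)| :=
        exp_lip_of_nonpos (min_le_left _ _) (min_le_left _ _)
    _ ≤ |((s + h) j - tauOf k (s + h)) - (s j - tauOf k s)| := min_zero_lip _ _
    _ = |((s + h) j - s j) - (tauOf k (s + h) - tauOf k s)| := by ring_nf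
    _ ≤ |(s + h) j - s j| + |tauOf k (s + h) - tauOf k s| := abs_sub _ _
    _ ≤ ‖h‖ + ‖h‖ := by
        rw [hcoord]
        exact add_le_add (coord_le_norm h j) htau
    _ = 2 * ‖h‖ := by ring

lemma rStar_hasFDerivAt (hk1 : 1 ≤ k) (hkd : k < d) (s : EuclideanSpace ℝ (Fin d)) :
    HasFDerivAt (rStarVec d k) (innerSL ℝ (yOfT s (tauOf k s))) s := by
  rw [hasFDerivAt_iff_isLittleO_nhds_zero]
  have bound : ∀ h : EuclideanSpace ℝ (Fin d),
      ‖rStarVec d k (s + h) - rStarVec d k s - (innerSL ℝ (yOfT s (tauOf k s))) h‖ ≤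
        (2 * d) * (‖h‖ * ‖h‖) := by
    intro h
    set y1 := yOfT s (tauOf k s) with hy1
    set y2 := yOfT (s + h) (tauOf k (s + h)) with hy2
    have happ : ∀ j, (s + h) j = s j + h j := fun j => rfl
    have hinner : (innerSL ℝ y1) h = ∑ j, h j * y1 j := by
      simp [PiLp.inner_apply, RCLike.inner_apply, conj_trivial, mul_comm]
    have hmem1 : y1 ∈ fantopeVec d k := yOfT_mem s _ (tauOf_spec hk1 hkd s)
    have hmem2 : y2 ∈ fantopeVec d k := yOfT_mem (s + h) _ (tauOf_spec hk1 hkd (s + h))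
    have low : rStarVec d k s + ∑ j, h j * y1 j ≤ rStarVec d k (s + h) := by
      have h1 : (∑ j, (s + h) j * y1 j) - rVec y1 ≤ rStarVec d k (s + h) :=
        rStarVec_ge (s + h) hmem1
      have h2 : (∑ j, (s + h) j * y1 j) = (∑ j, s j * y1 j) + ∑ j, h j * y1 j := by
        rw [← Finset.sum_add_distrib]
        exact Finset.sum_congr rfl (fun j _ => by rw [happ j]; ring)
      rw [rStar_eq_val hk1 hkd s, ← hy1]
      linarith [h1, h2.symm.le]
    have up : rStarVec d k (s + h) ≤ rStarVec d k s + ∑ j, h j * y2 j := by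
      have h1 : (∑ j, s j * y2 j) - rVec y2 ≤ rStarVec d k s := rStarVec_ge s hmem2
      have h2 : rStarVec d k (s + h) = (∑ j, (s + h) j * y2 j) - rVec y2 :=
        rStar_eq_val hk1 hkd (s + h)
      have h3 : (∑ j, (s + h) j * y2 j) = (∑ j, s j * y2 j) + ∑ j, h j * y2 j := by
        rw [← Finset.sum_add_distrib]
        exact Finset.sum_congr rfl (fun j _ => by rw [happ j]; ring)
      rw [h2, h3]
      linarith
    have hdiff : ∑ j, h j * y2 j - ∑ j, h j * y1 j ≤ (2 * d) * (‖h‖ * ‖h‖) := by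
      rw [← Finset.sum_sub_distrib]
      calc (∑ j, (h j * y2 j - h j * y1 j)) ≤ ∑ j, |h j * y2 j - h j * y1 j| :=
            Finset.sum_le_sum (fun j _ => le_abs_self _)
        _ = ∑ j, |h j| * |y2 j - y1 j| := by
            exact Finset.sum_congr rfl (fun j _ => by rw [← abs_mul]; congr 1; ring)
        _ ≤ ∑ _j : Fin d, ‖h‖ * (2 * ‖h‖) := by
            apply Finset.sum_le_sum
            intro j _
            apply mul_le_mul (coord_le_norm h j) (y_close hk1 hkd s h j) (abs_nonneg _)
              (norm_nonneg _)
        _ = (2 * d) * (‖h‖ * ‖h‖) := by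
            rw [Finset.sum_const, card_univ, Fintype.card_fin, nsmul_eq_mul]
            ring
    rw [hinner, Real.norm_eq_abs, abs_le]
    constructor
    · have : (0:ℝ) ≤ (2 * d) * (‖h‖ * ‖h‖) := by positivity
      linarith
    · linarith
  have hBig : (fun h : EuclideanSpace ℝ (Fin d) =>
      rStarVec d k (s + h) - rStarVec d k s - (innerSL ℝ (yOfT s (tauOf k s))) h) =O[nhds 0]
      (fun h : EuclideanSpace ℝ (Fin d) => ‖h‖ * ‖h‖) := by
    apply Asymptotics.IsBigO.of_bound (2 * d)
    filter_upwards with h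
    have := bound h
    simpa [norm_mul, abs_of_nonneg (norm_nonneg _)] using this
  apply hBig.trans_isLittleO
  have t1 : (fun h : EuclideanSpace ℝ (Fin d) => ‖h‖) =o[nhds 0] (fun _ => (1:ℝ)) := by
    rw [Asymptotics.isLittleO_one_iff]
    exact tendsto_norm_zero
  have t2 : (fun h : EuclideanSpace ℝ (Fin d) => ‖h‖) =O[nhds 0]
      (fun h : EuclideanSpace ℝ (Fin d) => ‖h‖) := Asymptotics.isBigO_refl _ _
  have t3 := t1.mul_isBigO t2
  simp only [one_mul] at t3
  apply t3.trans_isBigO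
  exact Asymptotics.isBigO_norm_left.2 (Asymptotics.isBigO_refl _ _)

lemma direction1 (hk1 : 1 ≤ k) (hkd : k < d) (s : EuclideanSpace ℝ (Fin d)) (τ : ℝ)
    (hroot : hfun s τ = (k : ℝ)) (hne : ∀ j, s j ≠ τ) :
    DifferentiableAt ℝ (fderiv ℝ (rStarVec d k)) s := by
  classical
  set A : Finset (Fin d) := univ.filter (fun j => s j < τ) with hA
  set B : Finset (Fin d) := univ.filter (fun j => τ < s j) with hB
  have hBc : B = univ.filter (fun j => ¬ s j < τ) := by
    rw [hB]
    apply Finset.filter_congr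
    intro j _
    constructor
    · intro h; exact not_lt.2 h.le
    · intro h; exact lt_of_le_of_ne (not_lt.1 h) (Ne.symm (hne j))
  have hsplit : ∀ f : Fin d → ℝ, ∑ j, f j = (∑ j ∈ A, f j) + ∑ j ∈ B, f j := by
    intro f
    rw [hBc, hA]
    exact (Finset.sum_filter_add_sum_filter_not univ _ f).symm
  set c : ℝ := (k : ℝ) - B.card with hc_def
  have hc_eq : (∑ j ∈ A, Real.exp (s j - τ)) = c := by
    have h1 : hfun s τ = (∑ j ∈ A, Real.exp (s j - τ)) + (B.card : ℝ) := by
      rw [hfun, hsplit]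
      congr 1
      · apply Finset.sum_congr rfl
        intro j hj
        rw [hA] at hj
        have := (Finset.mem_filter.1 hj).2
        rw [min_eq_right (by linarith)]
      · rw [Finset.sum_congr rfl (fun j hj => ?_), Finset.sum_const, nsmul_eq_mul, mul_one]
        rw [hB] at hj
        have := (Finset.mem_filter.1 hj).2
        rw [min_eq_left (by linarith), Real.exp_zero]
    rw [h1] at hroot
    rw [hc_def]
    linarith
  have hAne : A.Nonempty := by
    rw [Finset.nonempty_iff_ne_empty]
    intro hA0
    have hBuniv : B = univ := by
      rw [hBc]
      apply Finset.eq_univ_of_forall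
      intro j
      simp only [Finset.mem_filter, Finset.mem_univ, true_and]
      intro hlt
      have : j ∈ A := by rw [hA]; simp [hlt]
      rw [hA0] at this
      exact absurd this (Finset.notMem_empty j)
    have hz : (∑ j ∈ A, Real.exp (s j - τ)) = 0 := by rw [hA0]; simp
    rw [hc_def, hBuniv, Finset.card_univ, Fintype.card_fin, hz] at hc_eq
    have : (k : ℝ) = (d : ℝ) := by linarith
    exact absurd (Nat.cast_injective this) hkd.ne
  have hc : 0 < c := hc_eq ▸ Finset.sum_pos (fun j _ => Real.exp_pos _) hAne
  set Sg : EuclideanSpace ℝ (Fin d) → ℝ := fun x => ∑ j ∈ A, Real.exp (x j) with hSg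
  set T : EuclideanSpace ℝ (Fin d) → ℝ := fun x => Real.log (Sg x) - Real.log c with hT
  have hSgpos : ∀ x, 0 < Sg x := fun x => Finset.sum_pos (fun j _ => Real.exp_pos _) hAne
  have hSgS : Sg s = c * Real.exp τ := by
    rw [hSg, ← hc_eq, Finset.sum_mul]
    apply Finset.sum_congr rfl
    intro j _
    rw [← Real.exp_add]
    congr 1
    ring
  have hTs : T s = τ := by
    show Real.log (Sg s) - Real.log c = τ
    rw [hSgS, Real.log_mul hc.ne' (Real.exp_pos _).ne', Real.log_exp]
    ring
  have hSg2 : ContDiff ℝ 2 Sg := by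
    apply ContDiff.sum
    intro j _
    exact Real.contDiff_exp.comp (EuclideanSpace.proj (𝕜 := ℝ) (ι := Fin d) j).contDiff
  have hT2 : ContDiffAt ℝ 2 T s :=
    ((Real.contDiffAt_log.2 (hSgpos s).ne').comp s hSg2.contDiffAt).sub contDiffAt_const
  have hTcont : ContinuousAt T s := hT2.continuousAt
  have hev1 : ∀ᶠ x in nhds s, ∀ j ∈ A, x j < T x := by
    rw [Filter.eventually_all_finset]
    intro j hj
    have hcont : ContinuousAt (fun x : EuclideanSpace ℝ (Fin d) => T x - x j) s :=
      hTcont.sub (EuclideanSpace.proj j).continuous.continuousAt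
    have hpos : 0 < T s - s j := by
      rw [hTs]
      rw [hA] at hj
      have := (Finset.mem_filter.1 hj).2
      linarith
    have h2 := hcont.eventually (eventually_gt_nhds hpos)
    filter_upwards [h2] with x hx
    linarith [hx]
  have hev2 : ∀ᶠ x in nhds s, ∀ j ∈ B, T x < x j := by
    rw [Filter.eventually_all_finset]
    intro j hj
    have hcont : ContinuousAt (fun x : EuclideanSpace ℝ (Fin d) => x j - T x) s :=
      (EuclideanSpace.proj j).continuous.continuousAt.sub hTcont
    have hpos : 0 < s j - T s := by
      rw [hTs]
      rw [hB] at hj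
      have := (Finset.mem_filter.1 hj).2
      linarith
    have h2 := hcont.eventually (eventually_gt_nhds hpos)
    filter_upwards [h2] with x hx
    linarith [hx]
  set F : EuclideanSpace ℝ (Fin d) → ℝ := fun x =>
    (k : ℝ) * T x + ((∑ j ∈ A, Real.exp (x j - T x)) + ∑ j ∈ B, (1 + (x j - T x))) with hF
  have heq : rStarVec d k =ᶠ[nhds s] F := by
    filter_upwards [hev1, hev2] with x h1 h2
    have hAsum : (∑ j ∈ A, Real.exp (x j - T x)) = c := by
      have e1 : (∑ j ∈ A, Real.exp (x j - T x)) = Sg x * Real.exp (-(T x)) := by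
        show _ = (∑ j ∈ A, Real.exp (x j)) * Real.exp (-(T x))
        rw [Finset.sum_mul]
        apply Finset.sum_congr rfl
        intro j _
        rw [← Real.exp_add, sub_eq_add_neg]
      have e2 : Real.exp (-(T x)) = c / Sg x := by
        show Real.exp (-(Real.log (Sg x) - Real.log c)) = c / Sg x
        rw [neg_sub, Real.exp_sub, Real.exp_log hc, Real.exp_log (hSgpos x)]
      rw [e1, e2]
      field_simp
      exact div_self (hSgpos x).ne'
    have hrx : hfun x (T x) = (k : ℝ) := by
      rw [hfun, hsplit]
      have eA : (∑ j ∈ A, Real.exp (min 0 (x j - T x))) = ∑ j ∈ A, Real.exp (x j - T x) := by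
        apply Finset.sum_congr rfl
        intro j hj
        rw [min_eq_right (by linarith [h1 j hj])]
      have eB : (∑ j ∈ B, Real.exp (min 0 (x j - T x))) = (B.card : ℝ) := by
        rw [Finset.sum_congr rfl (fun j hj => ?_), Finset.sum_const, nsmul_eq_mul, mul_one]
        rw [min_eq_left (by linarith [h2 j hj]), Real.exp_zero]
      rw [eA, eB, hAsum, hc_def]
      ring
    rw [rStarVec_eq x (T x) hrx, hF]
    congr 1
    rw [hsplit (fun j => Real.exp (min 0 (x j - T x)) + max 0 (x j - T x))]
    congr 1
    · apply Finset.sum_congr rfl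
      intro j hj
      rw [min_eq_right (by linarith [h1 j hj]), max_eq_left (by linarith [h1 j hj])]
      ring
    · apply Finset.sum_congr rfl
      intro j hj
      rw [min_eq_left (by linarith [h2 j hj]), max_eq_right (by linarith [h2 j hj]),
        Real.exp_zero]
  have hF2 : ContDiffAt ℝ 2 F s := by
    apply ContDiffAt.add
    · exact contDiffAt_const.mul hT2
    apply ContDiffAt.add
    · apply ContDiffAt.sum
      intro j _
      exact Real.contDiff_exp.contDiffAt.comp s
        (((EuclideanSpace.proj j).contDiff.contDiffAt).sub hT2)
    · apply ContDiffAt.sum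
      intro j _
      exact contDiffAt_const.add (((EuclideanSpace.proj j).contDiff.contDiffAt).sub hT2)
  have hfd : fderiv ℝ (rStarVec d k) =ᶠ[nhds s] fderiv ℝ F := heq.fderiv
  rw [hfd.differentiableAt_iff]
  exact (hF2.fderiv_right (m := 1) (by norm_num)).differentiableAt one_ne_zero

set_option maxHeartbeats 2000000 in
lemma direction2 (hk1 : 1 ≤ k) (hkd : k < d) (s : EuclideanSpace ℝ (Fin d)) (τ : ℝ)
    (hroot : hfun s τ = (k : ℝ)) (j0 : Fin d) (hj0 : s j0 = τ) :
    ¬ DifferentiableAt ℝ (fderiv ℝ (rStarVec d k)) s := by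
  classical
  intro H
  set A : Finset (Fin d) := univ.filter (fun j => s j < τ) with hA
  set M : Finset (Fin d) := univ.filter (fun j => ¬ s j < τ) with hM
  have hj0M : j0 ∈ M := by rw [hM]; simp [hj0]
  set c : ℝ := ∑ j ∈ A, Real.exp (s j - τ) with hc_def
  have hsplit : ∀ f : Fin d → ℝ, ∑ j, f j = (∑ j ∈ A, f j) + ∑ j ∈ M, f j := by
    intro f
    rw [hM, hA]
    exact (Finset.sum_filter_add_sum_filter_not univ _ f).symm
  have hkey : c + (M.card : ℝ) = (k : ℝ) := by
    have h1 : hfun s τ = c + (M.card : ℝ) := by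
      rw [hfun, hsplit, hc_def]
      congr 1
      · apply Finset.sum_congr rfl
        intro j hj
        rw [hA] at hj
        have := (Finset.mem_filter.1 hj).2
        rw [min_eq_right (by linarith)]
      · rw [Finset.sum_congr rfl (fun j hj => ?_), Finset.sum_const, nsmul_eq_mul, mul_one]
        rw [hM] at hj
        have := not_lt.1 (Finset.mem_filter.1 hj).2
        rw [min_eq_left (by linarith), Real.exp_zero]
    rw [← h1, hroot]
  have hAne : A.Nonempty := by
    rw [Finset.nonempty_iff_ne_empty]
    intro hA0
    have hMuniv : M = univ := by
      rw [hM]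
      apply Finset.eq_univ_of_forall
      intro j
      simp only [Finset.mem_filter, Finset.mem_univ, true_and]
      intro hlt
      have : j ∈ A := by rw [hA]; simp [hlt]
      rw [hA0] at this
      exact absurd this (Finset.notMem_empty j)
    have hz : c = 0 := by rw [hc_def, hA0]; simp
    rw [hz, hMuniv, Finset.card_univ, Fintype.card_fin, zero_add] at hkey
    exact absurd (Nat.cast_injective hkey) hkd.ne'
  have hc : 0 < c := hc_def ▸ Finset.sum_pos (fun j _ => Real.exp_pos _) hAne
  have hc1 : (0:ℝ) < c + 1 := by linarith
  -- the perturbation line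
  set γ : ℝ → EuclideanSpace ℝ (Fin d) :=
    fun u => s + u • EuclideanSpace.single j0 (1:ℝ) with hγ
  have hγapp : ∀ u (j : Fin d), γ u j = if j = j0 then τ + u else s j := by
    intro u j
    have : γ u j = s j + u * (EuclideanSpace.single j0 (1:ℝ)) j := rfl
    rw [this, EuclideanSpace.single_apply]
    by_cases hjj : j = j0
    · subst hjj
      rw [if_pos rfl, if_pos rfl, mul_one, hj0]
    · rw [if_neg hjj, if_neg hjj, mul_zero, add_zero]
  -- the threshold curve for u ≤ 0
  set Q : ℝ → ℝ := fun u => (Real.exp (τ + u) + c * Real.exp τ) / (c + 1) with hQ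
  have hQpos : ∀ u, 0 < Q u := by
    intro u
    rw [hQ]
    have := Real.exp_pos (τ + u)
    have := Real.exp_pos τ
    positivity
  set tc : ℝ → ℝ := fun u => Real.log (Q u) with htc
  have hexp_tc : ∀ u, Real.exp (tc u) = Q u := fun u => Real.exp_log (hQpos u)
  have htc0 : tc 0 = τ := by
    have : Q 0 = Real.exp τ := by
      rw [hQ]; simp only [add_zero]; field_simp; ring
    rw [htc]
    show Real.log (Q 0) = τ
    rw [this, Real.log_exp]
  have htc_le : ∀ u ≤ 0, tc u ≤ τ := by
    intro u hu
    rw [htc]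
    show Real.log (Q u) ≤ τ
    rw [Real.log_le_iff_le_exp (hQpos u), hQ]
    rw [div_le_iff₀ hc1]
    have : Real.exp (τ + u) ≤ Real.exp τ := Real.exp_le_exp.2 (by linarith)
    nlinarith
  have htc_ge : ∀ u ≤ 0, τ + u ≤ tc u := by
    intro u hu
    rw [htc]
    show τ + u ≤ Real.log (Q u)
    rw [Real.le_log_iff_exp_le (hQpos u), hQ, le_div_iff₀ hc1]
    have : Real.exp (τ + u) ≤ Real.exp τ := Real.exp_le_exp.2 (by linarith)
    nlinarith
  have htccont : ContinuousAt tc 0 := by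
    apply Real.continuousAt_log (hQpos 0).ne' |>.comp
    rw [hQ]
    exact ((Real.continuous_exp.comp (continuous_const.add continuous_id)).add
      continuous_const).continuousAt.div_const _
  have hev : ∀ᶠ u in nhds (0:ℝ), ∀ j ∈ A, s j < tc u := by
    rw [Filter.eventually_all_finset]
    intro j hj
    have hpos : s j < tc 0 := by
      rw [htc0]
      rw [hA] at hj
      exact (Finset.mem_filter.1 hj).2
    exact htccont.eventually (eventually_gt_nhds hpos)
  -- hfun on the right branch
  have hright : ∀ u : ℝ, 0 ≤ u → hfun (γ u) τ = (k : ℝ) := by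
    intro u hu
    rw [← hroot]
    apply Finset.sum_congr rfl
    intro j _
    by_cases hjj : j = j0
    · subst hjj
      rw [hγapp, if_pos rfl, hj0]
      have e1 : min 0 (τ + u - τ) = 0 := min_eq_left (by linarith)
      have e2 : min 0 (τ - τ) = 0 := by simp
      rw [e1, e2]
    · rw [hγapp, if_neg hjj]
  -- hfun on the left branch
  have hleft : ∀ u : ℝ, u ≤ 0 → (∀ j ∈ A, s j < tc u) → hfun (γ u) (tc u) = (k : ℝ) := by
    intro u hu hAcond
    have hAj0 : ∀ j ∈ A, j ≠ j0 := by
      intro j hj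
      rw [hA] at hj
      have := (Finset.mem_filter.1 hj).2
      intro hcontra
      rw [hcontra, hj0] at this
      exact lt_irrefl _ this
    rw [hfun, hsplit]
    have eA : (∑ j ∈ A, Real.exp (min 0 (γ u j - tc u))) = c * (Real.exp τ / Q u) := by
      rw [hc_def, Finset.sum_mul]
      apply Finset.sum_congr rfl
      intro j hj
      rw [hγapp, if_neg (hAj0 j hj), min_eq_right (by linarith [hAcond j hj]),
        ← hexp_tc, ← Real.exp_sub, ← Real.exp_add]
      congr 1
      ring
    have eM : (∑ j ∈ M, Real.exp (min 0 (γ u j - tc u))) =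
        ((M.card : ℝ) - 1) + Real.exp (τ + u) / Q u := by
      rw [← Finset.sum_erase_add M _ hj0M]
      congr 1
      · have hterm : ∀ j ∈ M.erase j0, Real.exp (min 0 (γ u j - tc u)) = 1 := by
          intro j hj
          have hjne : j ≠ j0 := Finset.ne_of_mem_erase hj
          have hjM : j ∈ M := Finset.mem_of_mem_erase hj
          rw [hM] at hjM
          have hge : τ ≤ s j := not_lt.1 (Finset.mem_filter.1 hjM).2
          rw [hγapp, if_neg hjne, min_eq_left (by linarith [htc_le u hu]), Real.exp_zero]
        rw [Finset.sum_congr rfl hterm, Finset.sum_const, nsmul_eq_mul, mul_one,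
          Finset.card_erase_of_mem hj0M, Nat.cast_sub (Finset.card_pos.2 ⟨j0, hj0M⟩),
          Nat.cast_one]
      · rw [hγapp, if_pos rfl, min_eq_right (by linarith [htc_ge u hu]), Real.exp_sub,
          hexp_tc]
    rw [eA, eM]
    have hQu := hQpos u
    have hsum : c * (Real.exp τ / Q u) + Real.exp (τ + u) / Q u = c + 1 := by
      rw [hQ]
      have h1 : Real.exp (τ + u) + c * Real.exp τ > 0 := by positivity
      field_simp
      ring
    linarith [hkey, hsum]
  -- the directional slope function φ
  have hfderiv : ∀ x, fderiv ℝ (rStarVec d k) x = innerSL ℝ (yOfT x (tauOf k x)) :=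
    fun x => (rStar_hasFDerivAt hk1 hkd x).fderiv
  set v : EuclideanSpace ℝ (Fin d) := EuclideanSpace.single j0 (1:ℝ) with hv
  set φ : ℝ → ℝ := fun u => (fderiv ℝ (rStarVec d k) (γ u)) v with hφ
  have hφval : ∀ u, φ u = Real.exp (min 0 (γ u j0 - tauOf k (γ u))) := by
    intro u
    show (fderiv ℝ (rStarVec d k) (γ u)) v = _
    rw [hfderiv, hv]
    have : (innerSL ℝ (yOfT (γ u) (tauOf k (γ u)))) (EuclideanSpace.single j0 (1:ℝ)) =
        ∑ j, yOfT (γ u) (tauOf k (γ u)) j * (EuclideanSpace.single j0 (1:ℝ)) j := by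
      simp [PiLp.inner_apply, RCLike.inner_apply, conj_trivial]
    rw [this]
    rw [Finset.sum_eq_single j0]
    · rw [EuclideanSpace.single_apply, if_pos rfl, mul_one]; rfl
    · intro j _ hjne
      rw [EuclideanSpace.single_apply, if_neg hjne, mul_zero]
    · intro h; exact absurd (Finset.mem_univ j0) h
  have hφright : ∀ u : ℝ, 0 ≤ u → φ u = 1 := by
    intro u hu
    rw [hφval, tauOf_unique hk1 hkd (hright u hu), hγapp, if_pos rfl,
      min_eq_left (by linarith), Real.exp_zero]
  set ρ : ℝ → ℝ := fun u => ((c+1) * Real.exp (τ + u)) / (Real.exp (τ + u) + c * Real.exp τ)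
    with hρ
  have hρ0 : ρ 0 = 1 := by
    rw [hρ]
    show ((c+1) * Real.exp (τ + 0)) / (Real.exp (τ + 0) + c * Real.exp τ) = 1
    have hp : (0:ℝ) < Real.exp τ + c * Real.exp τ := by
      have := Real.exp_pos τ
      nlinarith [hc]
    rw [add_zero, div_eq_one_iff_eq (ne_of_gt hp)]
    ring
  have hφleft : ∀ᶠ u in nhdsWithin 0 (Set.Iic (0:ℝ)), φ u = ρ u := by
    filter_upwards [nhdsWithin_le_nhds hev, self_mem_nhdsWithin] with u hAu hu
    rw [hφval, tauOf_unique hk1 hkd (hleft u hu hAu), hγapp, if_pos rfl,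
      min_eq_right (by linarith [htc_ge u hu]), Real.exp_sub, hexp_tc, hρ, hQ]
    have h1 : Real.exp (τ + u) + c * Real.exp τ > 0 := by positivity
    field_simp
  -- φ is differentiable at 0
  have hγ0 : γ 0 = s := by rw [hγ]; simp
  have hγdiff : DifferentiableAt ℝ γ 0 := by
    apply DifferentiableAt.const_add
    exact differentiableAt_id.smul_const _
  have hφdiff : DifferentiableAt ℝ φ 0 := by
    have h1 : DifferentiableAt ℝ (fun u => fderiv ℝ (rStarVec d k) (γ u)) 0 := by
      have hH : DifferentiableAt ℝ (fderiv ℝ (rStarVec d k)) (γ 0) := by rw [hγ0]; exact H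
      exact hH.comp 0 hγdiff
    exact ((ContinuousLinearMap.apply ℝ ℝ v).differentiableAt).comp 0 h1
  have hD : HasDerivAt φ (deriv φ 0) 0 := hφdiff.hasDerivAt
  -- right derivative is 0
  have huIci : UniqueDiffWithinAt ℝ (Set.Ici (0:ℝ)) 0 := uniqueDiffOn_Ici 0 0 Set.self_mem_Ici
  have huIic : UniqueDiffWithinAt ℝ (Set.Iic (0:ℝ)) 0 := uniqueDiffOn_Iic 0 0 Set.self_mem_Iic
  have hDright : deriv φ 0 = 0 := by
    have hconst : HasDerivWithinAt φ 0 (Set.Ici (0:ℝ)) 0 :=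
      (hasDerivWithinAt_const (0:ℝ) (Set.Ici (0:ℝ)) (1:ℝ)).congr
        (fun x hx => hφright x hx) (hφright 0 le_rfl)
    rw [← hD.hasDerivWithinAt.derivWithin huIci, hconst.derivWithin huIci]
  -- left derivative is c/(c+1)
  have hE : HasDerivAt (fun u : ℝ => Real.exp (τ + u)) (Real.exp (τ + 0) * 1) 0 :=
    ((hasDerivAt_id (0:ℝ)).const_add τ).exp
  have hρD : HasDerivAt ρ (c / (c+1)) 0 := by
    have hNum := hE.const_mul (c + 1)
    have hDen := hE.add_const (c * Real.exp τ)
    have hden0 : Real.exp (τ + 0) + c * Real.exp τ ≠ 0 := by positivity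
    have hdiv := hNum.div hDen hden0
    refine hdiv.congr_deriv ?_
    rw [add_zero, mul_one]
    have h1 : Real.exp τ > 0 := Real.exp_pos τ
    field_simp
    ring
  have hDleft : deriv φ 0 = c / (c+1) := by
    have hwith : HasDerivWithinAt φ (c / (c+1)) (Set.Iic (0:ℝ)) 0 :=
      (hρD.hasDerivWithinAt).congr_of_eventuallyEq hφleft
        ((hφright 0 le_rfl).trans hρ0.symm)
    rw [← hD.hasDerivWithinAt.derivWithin huIic, hwith.derivWithin huIic]
  rw [hDright] at hDleft
  have : c / (c+1) > 0 := by positivity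
  rw [← hDleft] at this
  exact lt_irrefl _ this

lemma hfun_of_isGreatest (hk1 : 1 ≤ k) {s : EuclideanSpace ℝ (Fin d)} {τ : ℝ}
    (hτ : IsGreatest
      {t : ℝ | 0 < t ∧ Real.exp t ≤ (1 / (k : ℝ)) * ∑ j, Real.exp (min t (s j))} τ) :
    hfun s τ = (k : ℝ) := by
  have hk0 : (0:ℝ) < (k : ℝ) := by exact_mod_cast hk1
  have hconv : ∀ t : ℝ, (∑ j, Real.exp (min t (s j))) = Real.exp t * hfun s t := by
    intro t
    rw [hfun, Finset.mul_sum]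
    apply Finset.sum_congr rfl
    intro j _
    rw [← Real.exp_add]
    congr 1
    rcases le_total t (s j) with h | h
    · rw [min_eq_left h, min_eq_left (by linarith)]
      ring
    · rw [min_eq_right h, min_eq_right (by linarith)]
      ring
  obtain ⟨⟨hτpos, hτle⟩, hub⟩ := hτ
  rw [hconv] at hτle
  have hge : (k:ℝ) ≤ hfun s τ := by
    have h3 := mul_le_mul_of_nonneg_left hτle hk0.le
    have h4 : (k:ℝ) * (1 / (k:ℝ) * (Real.exp τ * hfun s τ)) = Real.exp τ * hfun s τ := by
      field_simp
    rw [h4] at h3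
    nlinarith [Real.exp_pos τ]
  have hle : hfun s τ ≤ (k:ℝ) := by
    by_contra hcon
    push_neg at hcon
    have hcont : ContinuousAt (hfun s) τ := (hfun_continuous s).continuousAt
    have hev' : ∀ᶠ t in nhds τ, (k:ℝ) < hfun s t := hcont.eventually (eventually_gt_nhds hcon)
    obtain ⟨ε, hε, hball⟩ := Metric.eventually_nhds_iff.1 hev'
    set t' := τ + ε/2 with ht'
    have hmem : (k:ℝ) < hfun s t' := by
      apply hball
      rw [Real.dist_eq, ht']
      rw [show τ + ε/2 - τ = ε/2 by ring, abs_of_pos (by linarith)]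
      linarith
    have ht'set : t' ∈ {t : ℝ | 0 < t ∧
        Real.exp t ≤ (1 / (k : ℝ)) * ∑ j, Real.exp (min t (s j))} := by
      constructor
      · rw [ht']; linarith
      · rw [hconv]
        rw [div_mul_eq_mul_div, le_div_iff₀ hk0]
        nlinarith [Real.exp_pos t', hmem.le]
    have := hub ht'set
    rw [ht'] at this
    linarith
  linarith

end RSV

/-- `r*_vec` is twice differentiable at `s` iff no coordinate of `s` equals
the truncation threshold `τ(s)`. -/
theorem rStarVec_twice_differentiable_iff (d k : ℕ) (hk1 : 1 ≤ k) (hkd : k < d)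
    (s : EuclideanSpace ℝ (Fin d)) (τ : ℝ)
    (hτ : IsGreatest
      {t : ℝ | 0 < t ∧ Real.exp t ≤ (1 / (k : ℝ)) * ∑ j, Real.exp (min t (s j))} τ) :
    DifferentiableAt ℝ (fderiv ℝ (rStarVec d k)) s ↔ ∀ j, s j ≠ τ := by
  have hroot : RSV.hfun s τ = (k : ℝ) := RSV.hfun_of_isGreatest hk1 hτ
  constructor
  · intro H j hj
    exact RSV.direction2 hk1 hkd s τ hroot j hj H
  · intro h
    exact RSV.direction1 hk1 hkd s τ hroot h
end

section
/- Let X_1, …, X_n be n points in ℝ^d with n ≥ 1, let δ ∈ (0, 1), and let g be a random vector in ℝ^d whose coordinates are independent standard Gaussians N(0,1). Then with probability at least 1 − δ over g, for every pair of indices i ≠ j with X_i ≠ X_j: (1/(4·log(n/δ)))·⟨g, X_i − X_j⟩² ≤ ‖X_i − X_j‖₂² ≤ (n⁴/δ²)·⟨g, X_i − X_j⟩². -/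
open MeasureTheory ProbabilityTheory Real
open scoped ENNReal NNReal

lemma gp_lintegral_pi_prod : ∀ (d : ℕ) (f : Fin d → ℝ → ℝ≥0∞), (∀ i, Measurable (f i)) →
    ∫⁻ x : Fin d → ℝ, ∏ i, f i (x i) ∂(Measure.pi fun _ => (volume : Measure ℝ))
      = ∏ i, ∫⁻ y, f i y := by
  intro d
  induction d with
  | zero => intro f hf; simp
  | succ m ih =>
    intro f hf
    have hpres := (measurePreserving_piFinSuccAbove (fun _ : Fin (m+1) => (volume : Measure ℝ)) 0).symm
    have hFm : Measurable fun x : Fin (m+1) → ℝ => ∏ i, f i (x i) :=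
      Finset.measurable_prod _ fun i _ => (hf i).comp (measurable_pi_apply i)
    rw [← hpres.lintegral_comp hFm]
    simp_rw [MeasurableEquiv.piFinSuccAbove_symm_apply, Fin.insertNthEquiv,
      Equiv.coe_fn_mk, Fin.insertNth_zero, Fin.prod_univ_succ, Fin.cons_zero, Fin.cons_succ]
    simp only [Fin.zero_succAbove, cast_eq]
    rw [lintegral_prod_mul (f := f 0) (g := fun z : Fin m → ℝ => ∏ x, f x.succ (z x))
      (hf 0).aemeasurable
      (Finset.measurable_prod _ fun i _ => (hf i.succ).comp (measurable_pi_apply i)).aemeasurable,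
      ih _ (fun i => hf i.succ)]

/-- The law of a random vector in `ℝ^d` with i.i.d. standard Gaussian `N(0,1)` coordinates. -/
noncomputable def gaussianVector (d : ℕ) : Measure (Fin d → ℝ) :=
  Measure.pi fun _ : Fin d => gaussianReal 0 1

lemma gp_pdf_eq (x : ℝ) :
    gaussianPDFReal 0 1 x = (Real.sqrt (2 * π))⁻¹ * Real.exp (-x ^ 2 / 2) := by
  simp [gaussianPDFReal]

lemma gp_pdf_prod (d : ℕ) (y : Fin d → ℝ) :
    (∏ l, gaussianPDF 0 1 (y l))
      = ENNReal.ofReal ((Real.sqrt (2 * π))⁻¹ ^ d * Real.exp (-(∑ l, (y l) ^ 2) / 2)) := by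
  simp only [gaussianPDF_def]
  rw [← ENNReal.ofReal_prod_of_nonneg (fun l _ => gaussianPDFReal_nonneg 0 1 (y l))]
  congr 1
  simp_rw [gp_pdf_eq, Finset.prod_mul_distrib, Finset.prod_const, Finset.card_univ,
    Fintype.card_fin, ← Real.exp_sum]
  congr 1
  rw [← Finset.sum_div, Finset.sum_neg_distrib, neg_div]

lemma gp_withDensity (d : ℕ) :
    gaussianVector d = (volume : Measure (Fin d → ℝ)).withDensity
      (fun x => ∏ l, gaussianPDF 0 1 (x l)) := by
  refine Measure.pi_eq fun s hs => ?_
  rw [withDensity_apply _ (MeasurableSet.univ_pi hs)]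
  have h1 : ∫⁻ x in Set.pi Set.univ s, ∏ l, gaussianPDF 0 1 (x l) ∂volume
      = ∫⁻ x : Fin d → ℝ, ∏ l, ((s l).indicator (gaussianPDF 0 1)) (x l)
          ∂(Measure.pi fun _ => (volume : Measure ℝ)) := by
    rw [← volume_pi, ← lintegral_indicator (MeasurableSet.univ_pi hs) _]
    refine lintegral_congr fun x => ?_
    by_cases hx : x ∈ Set.pi Set.univ s
    · rw [Set.indicator_of_mem hx]
      refine Finset.prod_congr rfl fun l _ => ?_
      rw [Set.indicator_of_mem (hx l (Set.mem_univ l))]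
    · rw [Set.indicator_of_notMem hx]
      rw [Set.mem_univ_pi] at hx
      push_neg at hx
      obtain ⟨l, hl⟩ := hx
      exact (Finset.prod_eq_zero (Finset.mem_univ l) (Set.indicator_of_notMem hl _)).symm
  rw [h1, gp_lintegral_pi_prod _ _ (fun i => (measurable_gaussianPDF 0 1).indicator (hs i))]
  refine Finset.prod_congr rfl fun l _ => ?_
  rw [lintegral_indicator (hs l) _, gaussianReal_apply _ one_ne_zero]

lemma gp_map_invariant {d : ℕ} {T : (Fin d → ℝ) → (Fin d → ℝ)}
    (hT : MeasurePreserving T (volume : Measure (Fin d → ℝ)) volume)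
    (hnorm : ∀ x, ∑ l, (T x l) ^ 2 = ∑ l, (x l) ^ 2) :
    Measure.map T (gaussianVector d) = gaussianVector d := by
  have hD : Measurable fun x : Fin d → ℝ => ∏ l, gaussianPDF 0 1 (x l) :=
    Finset.measurable_prod _ fun l _ =>
      (measurable_gaussianPDF 0 1).comp (measurable_pi_apply l)
  rw [gp_withDensity]
  ext s hs
  rw [Measure.map_apply hT.measurable hs, withDensity_apply _ (hT.measurable hs),
    withDensity_apply _ hs, ← lintegral_indicator (hT.measurable hs) _,
    ← lintegral_indicator hs _]
  have key : ∀ x, (T ⁻¹' s).indicator (fun x => ∏ l, gaussianPDF 0 1 (x l)) x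
      = s.indicator (fun x => ∏ l, gaussianPDF 0 1 (x l)) (T x) := by
    intro x
    have hDx : (∏ l, gaussianPDF 0 1 (T x l)) = ∏ l, gaussianPDF 0 1 (x l) := by
      rw [gp_pdf_prod, gp_pdf_prod, hnorm]
    by_cases hx : T x ∈ s
    · rw [Set.indicator_of_mem hx, Set.indicator_of_mem (by exact hx), hDx]
    · rw [Set.indicator_of_notMem hx, Set.indicator_of_notMem (by exact hx)]
  simp_rw [key]
  exact hT.lintegral_comp (hD.indicator hs)

lemma gp_map_eval (d : ℕ) (k : Fin d) :
    Measure.map (fun x : Fin d → ℝ => x k) (gaussianVector d) = gaussianReal 0 1 := by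
  ext s hs
  rw [Measure.map_apply (measurable_pi_apply k) hs]
  have : (fun x : Fin d → ℝ => x k) ⁻¹' s
      = Set.pi Set.univ (Function.update (fun _ => Set.univ) k s) := Set.eval_preimage
  rw [this, gaussianVector, Measure.pi_pi]
  rw [Finset.prod_eq_single_of_mem k (Finset.mem_univ k)
    (fun i _ hik => by simp [Function.update_of_ne hik])]
  simp

lemma gp_map_proj {d : ℕ} (hd : 1 ≤ d) (u : Fin d → ℝ) (hu : ∑ l, u l ^ 2 = 1) :
    Measure.map (fun g : Fin d → ℝ => ∑ l, g l * u l) (gaussianVector d)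
      = gaussianReal 0 1 := by
  have k₀ : Fin d := ⟨0, hd⟩
  set u' : EuclideanSpace ℝ (Fin d) := (WithLp.equiv 2 (Fin d → ℝ)).symm u with hu'def
  have hnu : ‖u'‖ = 1 := by
    rw [EuclideanSpace.norm_eq]
    have : ∀ l, ‖u' l‖ ^ 2 = u l ^ 2 := by
      intro l
      rw [Real.norm_eq_abs, sq_abs, hu'def, WithLp.equiv_symm_apply, PiLp.toLp_apply]
    simp_rw [this, hu, Real.sqrt_one]
  have horth : Orthonormal ℝ (({k₀} : Set (Fin d)).restrict (fun _ : Fin d => u')) := by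
    constructor
    · intro i; exact hnu
    · intro i j hij
      exact absurd (Subtype.ext ((Set.mem_singleton_iff.mp i.2).trans
        (Set.mem_singleton_iff.mp j.2).symm)) hij
  obtain ⟨b, hb⟩ := horth.exists_orthonormalBasis_extension_of_card_eq
    (by simp [finrank_euclideanSpace])
  have hbk : b k₀ = u' := hb k₀ rfl
  set e := (MeasurableEquiv.toLp 2 (Fin d → ℝ)).symm with hedef
  set T : (Fin d → ℝ) → (Fin d → ℝ) := ⇑e ∘ ⇑b.repr ∘ ⇑e.symm with hTdef
  have hTpres : MeasurePreserving T (volume : Measure (Fin d → ℝ)) volume :=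
    (EuclideanSpace.volume_preserving_symm_measurableEquiv_toLp (Fin d)).comp
      (b.measurePreserving_repr.comp
        (EuclideanSpace.volume_preserving_symm_measurableEquiv_toLp (Fin d)).symm)
  have hsq : ∀ y : EuclideanSpace ℝ (Fin d), ∑ l, (y l) ^ 2 = ‖y‖ ^ 2 := by
    intro y
    rw [EuclideanSpace.norm_eq, Real.sq_sqrt (by positivity)]
    refine Finset.sum_congr rfl fun l _ => ?_
    rw [Real.norm_eq_abs, sq_abs]
  have happ : ∀ (x : Fin d → ℝ) (l : Fin d), T x l = b.repr (e.symm x) l := fun x l => rfl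
  have hnorm : ∀ x : Fin d → ℝ, ∑ l, (T x l) ^ 2 = ∑ l, (x l) ^ 2 := by
    intro x
    simp_rw [happ]
    rw [hsq (b.repr (e.symm x)), LinearIsometryEquiv.norm_map, ← hsq (e.symm x)]
    exact Finset.sum_congr rfl fun l _ => rfl
  have hfun : (fun g : Fin d → ℝ => ∑ l, g l * u l) = (fun y : Fin d → ℝ => y k₀) ∘ T := by
    funext g
    have : T g k₀ = b.repr (e.symm g) k₀ := rfl
    rw [Function.comp_apply, this, OrthonormalBasis.repr_apply_apply, hbk]
    rw [hu'def]
    simp only [PiLp.inner_apply, RCLike.inner_apply, conj_trivial,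
      WithLp.equiv_symm_apply, PiLp.toLp_apply]
    exact Finset.sum_congr rfl fun l _ => rfl
  rw [hfun, ← Measure.map_map (measurable_pi_apply k₀) hTpres.measurable,
    gp_map_invariant hTpres hnorm, gp_map_eval]

set_option maxHeartbeats 1000000

lemma gp_pdf_shift (c x : ℝ) : gaussianPDFReal c 1 x = gaussianPDFReal 0 1 (x - c) := by
  simp [gaussianPDFReal]

lemma gp_half (c : ℝ) : ∫ x in Set.Ici c, gaussianPDFReal c 1 x = 1 / 2 := by
  simp_rw [gp_pdf_shift c]
  rw [← integral_indicator measurableSet_Ici]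
  have h2 : ∀ x : ℝ, (Set.Ici c).indicator (fun x => gaussianPDFReal 0 1 (x - c)) x
      = (Set.Ici (0 : ℝ)).indicator (gaussianPDFReal 0 1) (x - c) := by
    intro x
    by_cases hx : x ∈ Set.Ici c
    · rw [Set.indicator_of_mem hx, Set.indicator_of_mem (by simpa [Set.mem_Ici, sub_nonneg] using hx)]
    · rw [Set.indicator_of_notMem hx, Set.indicator_of_notMem (by simpa [Set.mem_Ici, sub_nonneg] using hx)]
  simp_rw [h2]
  rw [integral_sub_right_eq_self (fun x => (Set.Ici (0 : ℝ)).indicator (gaussianPDFReal 0 1) x) c,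
    integral_indicator measurableSet_Ici]
  simp_rw [gp_pdf_eq]
  rw [integral_const_mul, MeasureTheory.integral_Ici_eq_integral_Ioi]
  have h3 : ∀ x : ℝ, Real.exp (-x ^ 2 / 2) = Real.exp (-(2⁻¹ : ℝ) * x ^ 2) := by
    intro x; ring_nf
  simp_rw [h3]
  rw [integral_gaussian_Ioi, show π / (2⁻¹ : ℝ) = 2 * π by ring]
  have hne : Real.sqrt (2 * π) ≠ 0 := by positivity
  field_simp

lemma gp_symm (t : ℝ) : gaussianReal 0 1 (Set.Iic (-t)) = gaussianReal 0 1 (Set.Ici t) := by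
  have hmap := gaussianReal_map_const_mul (μ := 0) (v := 1) (-1 : ℝ)
  have h1 : gaussianReal ((-1 : ℝ) * 0) (⟨(-1 : ℝ) ^ 2, sq_nonneg _⟩ * 1) = gaussianReal 0 1 := by
    norm_num
    congr 1; exact mul_one (1 : ℝ≥0)
  replace hmap := hmap.trans h1
  have hpre : ((-1 : ℝ) * ·) ⁻¹' (Set.Iic (-t)) = Set.Ici t := by
    ext x
    simp [neg_le_neg_iff, le_neg]
  calc gaussianReal 0 1 (Set.Iic (-t))
      = (Measure.map ((-1 : ℝ) * ·) (gaussianReal 0 1)) (Set.Iic (-t)) := by rw [hmap]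
    _ = gaussianReal 0 1 (((-1 : ℝ) * ·) ⁻¹' (Set.Iic (-t))) :=
        Measure.map_apply (measurable_const_mul _) measurableSet_Iic
    _ = gaussianReal 0 1 (Set.Ici t) := by rw [hpre]

lemma gp_tail_Ici (t : ℝ) (ht : 0 ≤ t) :
    gaussianReal 0 1 (Set.Ici t) ≤ ENNReal.ofReal (Real.exp (-t ^ 2 / 2) * (1 / 2)) := by
  rw [gaussianReal_apply_eq_integral _ one_ne_zero]
  refine ENNReal.ofReal_le_ofReal ?_
  have hmono : ∫ x in Set.Ici t, gaussianPDFReal 0 1 x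
      ≤ ∫ x in Set.Ici t, Real.exp (-t ^ 2 / 2) * gaussianPDFReal t 1 x := by
    refine setIntegral_mono_on (integrable_gaussianPDFReal 0 1).integrableOn
      ((integrable_gaussianPDFReal t 1).const_mul _).integrableOn measurableSet_Ici ?_
    intro x hx
    have hx' : t ≤ x := hx
    rw [gp_pdf_eq, gp_pdf_shift, gp_pdf_eq]
    have h3 : Real.exp (-x ^ 2 / 2) ≤ Real.exp (-t ^ 2 / 2) * Real.exp (-(x - t) ^ 2 / 2) := by
      rw [← Real.exp_add]
      apply Real.exp_le_exp.mpr
      nlinarith [mul_nonneg ht (sub_nonneg.mpr hx')]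
    calc (Real.sqrt (2 * π))⁻¹ * Real.exp (-x ^ 2 / 2)
        ≤ (Real.sqrt (2 * π))⁻¹ * (Real.exp (-t ^ 2 / 2) * Real.exp (-(x - t) ^ 2 / 2)) := by
          apply mul_le_mul_of_nonneg_left h3
          positivity
      _ = Real.exp (-t ^ 2 / 2) * ((Real.sqrt (2 * π))⁻¹ * Real.exp (-(x - t) ^ 2 / 2)) := by ring
  refine hmono.trans ?_
  rw [integral_const_mul, gp_half]

lemma gp_tail (t : ℝ) (ht : 0 ≤ t) :
    gaussianReal 0 1 {x : ℝ | t ≤ |x|} ≤ ENNReal.ofReal (Real.exp (-t ^ 2 / 2)) := by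
  have hsub : {x : ℝ | t ≤ |x|} ⊆ Set.Iic (-t) ∪ Set.Ici t := by
    intro x hx
    rcases le_total 0 x with h | h
    · right; rwa [Set.mem_Ici, ← abs_of_nonneg h]
    · left; rw [Set.mem_Iic, le_neg]; rwa [← abs_of_nonpos h]
  calc gaussianReal 0 1 {x : ℝ | t ≤ |x|}
      ≤ gaussianReal 0 1 (Set.Iic (-t) ∪ Set.Ici t) := measure_mono hsub
    _ ≤ gaussianReal 0 1 (Set.Iic (-t)) + gaussianReal 0 1 (Set.Ici t) := measure_union_le _ _
    _ = gaussianReal 0 1 (Set.Ici t) + gaussianReal 0 1 (Set.Ici t) := by rw [gp_symm]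
    _ ≤ ENNReal.ofReal (Real.exp (-t ^ 2 / 2) * (1 / 2))
        + ENNReal.ofReal (Real.exp (-t ^ 2 / 2) * (1 / 2)) := by
          exact add_le_add (gp_tail_Ici t ht) (gp_tail_Ici t ht)
    _ = ENNReal.ofReal (Real.exp (-t ^ 2 / 2)) := by
          rw [← ENNReal.ofReal_add (by positivity) (by positivity)]
          ring_nf

lemma gp_small (ε : ℝ) (hε : 0 ≤ ε) :
    gaussianReal 0 1 {x : ℝ | |x| ≤ ε} ≤ ENNReal.ofReal ε := by
  have hset : {x : ℝ | |x| ≤ ε} = Set.Icc (-ε) ε := by ext x; simp [abs_le]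
  rw [hset, gaussianReal_apply_eq_integral _ one_ne_zero]
  refine ENNReal.ofReal_le_ofReal ?_
  have hsqrt : (2 : ℝ) ≤ Real.sqrt (2 * π) := by
    have h5 : Real.sqrt 4 ≤ Real.sqrt (2 * π) := Real.sqrt_le_sqrt (by nlinarith [Real.pi_gt_three])
    have h4 : Real.sqrt 4 = 2 := by
      rw [show (4 : ℝ) = 2 ^ 2 by norm_num, Real.sqrt_sq (by norm_num)]
    linarith
  have hb : ∀ x ∈ Set.Icc (-ε) ε, gaussianPDFReal 0 1 x ≤ 1 / 2 := by
    intro x _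
    rw [gp_pdf_eq]
    have h1 : Real.exp (-x ^ 2 / 2) ≤ 1 := by
      rw [Real.exp_le_one_iff]
      nlinarith [sq_nonneg x]
    have h2 : (Real.sqrt (2 * π))⁻¹ ≤ 1 / 2 := by
      rw [show (1 : ℝ) / 2 = 2⁻¹ by norm_num]
      exact inv_anti₀ (by norm_num) hsqrt
    calc (Real.sqrt (2 * π))⁻¹ * Real.exp (-x ^ 2 / 2)
        ≤ (Real.sqrt (2 * π))⁻¹ * 1 := by
          apply mul_le_mul_of_nonneg_left h1; positivity
      _ ≤ 1 / 2 := by rwa [mul_one]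
  calc ∫ x in Set.Icc (-ε) ε, gaussianPDFReal 0 1 x
      ≤ ∫ _x in Set.Icc (-ε) ε, (1 : ℝ) / 2 :=
        setIntegral_mono_on (integrable_gaussianPDFReal 0 1).integrableOn
          (integrableOn_const (by rw [Real.volume_Icc]; exact ENNReal.ofReal_ne_top))
          measurableSet_Icc hb
    _ = (volume (Set.Icc (-ε) ε)).toReal * (1 / 2) := by rw [setIntegral_const, smul_eq_mul, measureReal_def]
    _ ≤ ε := by
        rw [Real.volume_Icc, ENNReal.toReal_ofReal (by linarith)]
        linarith

/-- A random one-dimensional Gaussian projection preserves all pairwise distances up to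
polynomial factors, with probability at least `1 − δ`. -/
theorem gaussian_projection_distance_preservation (d n : ℕ) (hd : 1 ≤ d) (hn : 1 ≤ n)
    (X : Fin n → Fin d → ℝ) (δ : ℝ) (hδ : δ ∈ Set.Ioo (0 : ℝ) 1) :
    ENNReal.ofReal (1 - δ) ≤
      gaussianVector d
        {g | ∀ i j : Fin n, i ≠ j → X i ≠ X j →
          (1 / (4 * Real.log ((n : ℝ) / δ))) * (∑ l, g l * (X i l - X j l)) ^ 2 ≤
            (∑ l, (X i l - X j l) ^ 2) ∧
          (∑ l, (X i l - X j l) ^ 2) ≤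
            ((n : ℝ) ^ 4 / δ ^ 2) * (∑ l, g l * (X i l - X j l)) ^ 2} := by
  obtain ⟨hδ0, hδ1⟩ := hδ
  have hn0 : (0 : ℝ) < n := by exact_mod_cast hn
  set L : ℝ := Real.log ((n : ℝ) / δ) with hLdef
  have hL : 0 < L := Real.log_pos (by
    rw [lt_div_iff₀ hδ0]
    have h1n : (1 : ℝ) ≤ (n : ℝ) := by exact_mod_cast hn
    nlinarith)
  set ε₀ : ℝ := δ / (n : ℝ) ^ 2 with hε₀def
  set t₀ : ℝ := 2 * Real.sqrt L with ht₀def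
  have ht₀ : 0 ≤ t₀ := by positivity
  have hε₀ : 0 < ε₀ := by positivity
  have hprob : IsProbabilityMeasure (gaussianVector d) := by
    unfold gaussianVector; infer_instance
  set Bad : Fin n × Fin n → Set (Fin d → ℝ) := fun p =>
    {g | 4 * L * (∑ l, (X p.1 l - X p.2 l) ^ 2) ≤ (∑ l, g l * (X p.1 l - X p.2 l)) ^ 2 ∨
      (∑ l, g l * (X p.1 l - X p.2 l)) ^ 2 ≤ ε₀ ^ 2 * ∑ l, (X p.1 l - X p.2 l) ^ 2}
    with hBadDef
  set P : Finset (Fin n × Fin n) :=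
    Finset.univ.filter (fun p => p.1 < p.2 ∧ X p.1 ≠ X p.2) with hPdef
  set B : Set (Fin d → ℝ) := ⋃ p ∈ P, Bad p with hBDef
  have hZm : ∀ p : Fin n × Fin n, Measurable (fun g : Fin d → ℝ =>
      ∑ l, g l * (X p.1 l - X p.2 l)) := fun p =>
    Finset.measurable_sum _ fun l _ => (measurable_pi_apply l).mul_const _
  have hBadMeas : ∀ p, MeasurableSet (Bad p) := by
    intro p
    rw [hBadDef]
    have h1 : Measurable fun g : Fin d → ℝ =>
        (∑ l, g l * (X p.1 l - X p.2 l)) ^ 2 := (hZm p).pow_const 2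
    exact ((measurableSet_le measurable_const h1).union
      (measurableSet_le h1 measurable_const))
  have hBMeas : MeasurableSet B :=
    Set.Finite.measurableSet_biUnion (P : Set (Fin n × Fin n)).toFinite
      fun p _ => hBadMeas p
  -- per-pair bound
  have hpair : ∀ p ∈ P, gaussianVector d (Bad p)
      ≤ ENNReal.ofReal ((δ ^ 2 + δ) / (n : ℝ) ^ 2) := by
    intro p hp
    have hne : X p.1 ≠ X p.2 := by
      rw [hPdef, Finset.mem_filter] at hp
      exact hp.2.2
    set v : Fin d → ℝ := fun l => X p.1 l - X p.2 l with hvdef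
    have hvne : ∃ l, v l ≠ 0 := by
      by_contra h
      push_neg at h
      exact hne (funext fun l => sub_eq_zero.mp (h l))
    obtain ⟨l₀, hl₀⟩ := hvne
    set S : ℝ := ∑ l, v l ^ 2 with hSdef
    have hS : 0 < S := by
      refine Finset.sum_pos' (fun l _ => sq_nonneg _) ⟨l₀, Finset.mem_univ _, ?_⟩
      exact lt_of_le_of_ne (sq_nonneg _) (Ne.symm (pow_ne_zero 2 hl₀))
    set r : ℝ := Real.sqrt S with hrdef
    have hr : 0 < r := Real.sqrt_pos.mpr hS
    have hr2 : r ^ 2 = S := Real.sq_sqrt hS.le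
    set u : Fin d → ℝ := fun l => v l / r with hudef
    have hu : ∑ l, u l ^ 2 = 1 := by
      simp_rw [hudef, div_pow]
      rw [← Finset.sum_div, ← hSdef, ← hr2, div_self (by positivity)]
    have hmap := gp_map_proj hd u hu
    set W : (Fin d → ℝ) → ℝ := fun g => ∑ l, g l * u l with hWdef
    have hWm : Measurable W :=
      Finset.measurable_sum _ fun l _ => (measurable_pi_apply l).mul_const _
    have hZW : ∀ g : Fin d → ℝ, (∑ l, g l * v l) = r * W g := by
      intro g
      rw [hWdef, Finset.mul_sum]
      refine Finset.sum_congr rfl fun l _ => ?_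
      rw [hudef]
      field_simp
    have ht₀sq : t₀ ^ 2 = 4 * L := by
      rw [ht₀def, mul_pow, Real.sq_sqrt hL.le]; norm_num
    have hBadEq : Bad p = W ⁻¹' ({x : ℝ | t₀ ≤ |x|} ∪ {x : ℝ | |x| ≤ ε₀}) := by
      rw [hBadDef]
      ext g
      simp only [Set.mem_setOf_eq, Set.mem_preimage, Set.mem_union]
      have hZ2 : (∑ l, g l * v l) ^ 2 = S * W g ^ 2 := by
        rw [hZW g, mul_pow, hr2]
      constructor
      · rintro (h | h)
        · left
          rw [hZ2] at h
          have h4 : 4 * L ≤ W g ^ 2 := by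
            have := (mul_le_mul_iff_right₀ hS).mp (by linarith : S * (4 * L) ≤ S * W g ^ 2)
            linarith
          rw [← Real.sqrt_sq_eq_abs]
          calc t₀ = Real.sqrt (t₀ ^ 2) := (Real.sqrt_sq ht₀).symm
            _ ≤ Real.sqrt (W g ^ 2) := Real.sqrt_le_sqrt (by rw [ht₀sq]; exact h4)
        · right
          rw [hZ2] at h
          have h4 : W g ^ 2 ≤ ε₀ ^ 2 := by
            have := (mul_le_mul_iff_right₀ hS).mp (by linarith : S * W g ^ 2 ≤ S * ε₀ ^ 2)
            linarith
          rw [← Real.sqrt_sq_eq_abs]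
          calc Real.sqrt (W g ^ 2) ≤ Real.sqrt (ε₀ ^ 2) := Real.sqrt_le_sqrt h4
            _ = ε₀ := Real.sqrt_sq hε₀.le
      · rintro (h | h)
        · left
          rw [hZ2]
          have h4 : 4 * L ≤ W g ^ 2 := by
            rw [← ht₀sq, ← sq_abs (W g)]
            exact pow_le_pow_left₀ ht₀ h 2
          nlinarith
        · right
          rw [hZ2]
          have h4 : W g ^ 2 ≤ ε₀ ^ 2 := by
            rw [← sq_abs (W g)]
            exact pow_le_pow_left₀ (abs_nonneg _) h 2
          nlinarith
    have hexp : Real.exp (-t₀ ^ 2 / 2) = (δ / (n : ℝ)) ^ 2 := by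
      rw [ht₀sq, show -(4 * L) / 2 = -(2 * L) by ring, Real.exp_neg,
        show (2 : ℝ) * L = L + L by ring, Real.exp_add, hLdef,
        Real.exp_log (by positivity), ← sq, ← inv_pow, inv_div]
    calc gaussianVector d (Bad p)
        = gaussianVector d (W ⁻¹' {x : ℝ | t₀ ≤ |x|} ∪ W ⁻¹' {x : ℝ | |x| ≤ ε₀}) := by
          rw [hBadEq, Set.preimage_union]
      _ ≤ gaussianVector d (W ⁻¹' {x : ℝ | t₀ ≤ |x|})
          + gaussianVector d (W ⁻¹' {x : ℝ | |x| ≤ ε₀}) := measure_union_le _ _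
      _ = gaussianReal 0 1 {x : ℝ | t₀ ≤ |x|} + gaussianReal 0 1 {x : ℝ | |x| ≤ ε₀} := by
          rw [← hmap, Measure.map_apply hWm (measurableSet_le measurable_const measurable_abs),
            Measure.map_apply hWm (measurableSet_le measurable_abs measurable_const)]
      _ ≤ ENNReal.ofReal (Real.exp (-t₀ ^ 2 / 2)) + ENNReal.ofReal ε₀ :=
          add_le_add (gp_tail t₀ ht₀) (gp_small ε₀ hε₀.le)
      _ = ENNReal.ofReal ((δ ^ 2 + δ) / (n : ℝ) ^ 2) := by
          rw [hexp, ← ENNReal.ofReal_add (by positivity) (by positivity)]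
          congr 1
          rw [hε₀def, div_pow, ← add_div]
  -- cardinality
  have hcard : 2 * P.card ≤ n ^ 2 := by
    set F : Finset (Fin n × Fin n) := Finset.univ.filter (fun p => p.1 < p.2) with hFdef
    have hPF : P ⊆ F := by
      intro p hp
      rw [hPdef, Finset.mem_filter] at hp
      rw [hFdef, Finset.mem_filter]
      exact ⟨hp.1, hp.2.1⟩
    have hdisj : Disjoint F (F.image Prod.swap) := by
      rw [Finset.disjoint_left]
      intro p hp hp'
      rw [Finset.mem_image] at hp'
      obtain ⟨q, hq, hqp⟩ := hp'
      rw [hFdef, Finset.mem_filter] at hp hq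
      rw [← hqp] at hp
      exact absurd hq.2 (asymm hp.2)
    have hcardF : F.card + F.card ≤ n * n := by
      calc F.card + F.card = F.card + (F.image Prod.swap).card := by
            rw [Finset.card_image_of_injective _ Prod.swap_injective]
        _ = (F ∪ F.image Prod.swap).card := (Finset.card_union_of_disjoint hdisj).symm
        _ ≤ (Finset.univ : Finset (Fin n × Fin n)).card := Finset.card_le_univ _
        _ = n * n := by rw [Finset.card_univ, Fintype.card_prod, Fintype.card_fin]
    have := Finset.card_le_card hPF
    calc 2 * P.card = P.card + P.card := by ring
      _ ≤ F.card + F.card := by omega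
      _ ≤ n * n := hcardF
      _ = n ^ 2 := (sq n).symm
  -- union bound
  have hνB : gaussianVector d B ≤ ENNReal.ofReal δ := by
    calc gaussianVector d B ≤ ∑ p ∈ P, gaussianVector d (Bad p) :=
          measure_biUnion_finset_le P Bad
      _ ≤ ∑ _p ∈ P, ENNReal.ofReal ((δ ^ 2 + δ) / (n : ℝ) ^ 2) :=
          Finset.sum_le_sum hpair
      _ = (P.card : ℝ≥0∞) * ENNReal.ofReal ((δ ^ 2 + δ) / (n : ℝ) ^ 2) := by
          rw [Finset.sum_const, nsmul_eq_mul]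
      _ = ENNReal.ofReal ((P.card : ℝ) * ((δ ^ 2 + δ) / (n : ℝ) ^ 2)) := by
          rw [ENNReal.ofReal_mul (Nat.cast_nonneg P.card), ENNReal.ofReal_natCast]
      _ ≤ ENNReal.ofReal δ := by
          apply ENNReal.ofReal_le_ofReal
          have hc : 2 * (P.card : ℝ) ≤ (n : ℝ) ^ 2 := by exact_mod_cast hcard
          rw [mul_div_assoc', div_le_iff₀ (by positivity : (0 : ℝ) < (n : ℝ) ^ 2)]
          nlinarith [mul_nonneg (Nat.cast_nonneg P.card : (0 : ℝ) ≤ (P.card : ℝ))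
            (mul_nonneg hδ0.le (by linarith : (0 : ℝ) ≤ 1 - δ)),
            mul_le_mul_of_nonneg_left hc hδ0.le]
  -- complement inclusion
  have hsub : Bᶜ ⊆ {g : Fin d → ℝ | ∀ i j : Fin n, i ≠ j → X i ≠ X j →
      (1 / (4 * L)) * (∑ l, g l * (X i l - X j l)) ^ 2 ≤
        (∑ l, (X i l - X j l) ^ 2) ∧
      (∑ l, (X i l - X j l) ^ 2) ≤
        ((n : ℝ) ^ 4 / δ ^ 2) * (∑ l, g l * (X i l - X j l)) ^ 2} := by
    intro g hg
    have hε₀n4 : (n : ℝ) ^ 4 * ε₀ ^ 2 = δ ^ 2 := by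
      rw [hε₀def, div_pow]
      field_simp
    have main : ∀ i j : Fin n, i < j → X i ≠ X j →
        (1 / (4 * L)) * (∑ l, g l * (X i l - X j l)) ^ 2 ≤
          (∑ l, (X i l - X j l) ^ 2) ∧
        (∑ l, (X i l - X j l) ^ 2) ≤
          ((n : ℝ) ^ 4 / δ ^ 2) * (∑ l, g l * (X i l - X j l)) ^ 2 := by
      intro i j hlt hne
      have hp : (i, j) ∈ P := by
        rw [hPdef, Finset.mem_filter]
        exact ⟨Finset.mem_univ _, hlt, hne⟩
      have hg' : g ∉ Bad (i, j) := fun h => hg (Set.mem_biUnion hp h)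
      rw [hBadDef] at hg'
      simp only [Set.mem_setOf_eq] at hg'
      push_neg at hg'
      obtain ⟨h1, h2⟩ := hg'
      constructor
      · rw [div_mul_eq_mul_div, one_mul, div_le_iff₀ (by positivity : (0 : ℝ) < 4 * L)]
        nlinarith
      · rw [div_mul_eq_mul_div, le_div_iff₀ (by positivity : (0 : ℝ) < δ ^ 2)]
        nlinarith [mul_lt_mul_of_pos_left h2 (by positivity : (0 : ℝ) < (n : ℝ) ^ 4)]
    intro i j hij hXij
    rcases lt_trichotomy i j with hlt | heq | hgt
    · exact main i j hlt hXij
    · exact absurd heq hij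
    · have hXji : X j ≠ X i := fun h => hXij h.symm
      obtain ⟨m1, m2⟩ := main j i hgt hXji
      have hsum : (∑ l, g l * (X i l - X j l)) = -(∑ l, g l * (X j l - X i l)) := by
        rw [← Finset.sum_neg_distrib]
        exact Finset.sum_congr rfl fun l _ => by ring
      have hsq : (∑ l, (X i l - X j l) ^ 2) = ∑ l, (X j l - X i l) ^ 2 :=
        Finset.sum_congr rfl fun l _ => by ring
      rw [hsum, hsq, Even.neg_pow (by norm_num : Even 2)]
      exact ⟨m1, m2⟩
  calc ENNReal.ofReal (1 - δ) = 1 - ENNReal.ofReal δ := by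
        rw [ENNReal.ofReal_sub _ hδ0.le, ENNReal.ofReal_one]
    _ ≤ 1 - gaussianVector d B := tsub_le_tsub_left hνB 1
    _ = gaussianVector d Bᶜ := (prob_compl_eq_one_sub hBMeas).symm
    _ ≤ _ := measure_mono hsub
end

section
/- Let w ∈ ℝ^n be entrywise nonnegative with ∑_{i=1}^n w_i ≤ 1, let τ ∈ ℝ^n be entrywise nonnegative, and suppose τ_max := max{ τ_i : i with w_i ≠ 0 } > 0. For K ∈ ℕ with K ≥ 1, define w^(K)_i := (1 − τ_i/τ_max)^K·w_i for each i with w_i ≠ 0 (and w^(K)_i := 0 otherwise). Then ∑_{i=1}^n w^(K)_i·τ_i ≤ τ_max/(e·K), where e is Euler's number. -/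
open Finset

lemma key_pow (K : ℕ) (hK : 1 ≤ K) (x : ℝ) (hx0 : 0 ≤ x) (hx1 : x ≤ 1) :
    (1 - x) ^ K * x ≤ 1 / (Real.exp 1 * K) := by
  have hKpos : (0:ℝ) < K := by exact_mod_cast hK
  have h1 : (1 - x) ^ K ≤ Real.exp (-(K * x)) := by
    have hbx : 1 - x ≤ Real.exp (-x) := by
      have := Real.add_one_le_exp (-x); linarith
    calc (1 - x) ^ K ≤ Real.exp (-x) ^ K :=
          pow_le_pow_left₀ (by linarith) hbx K
      _ = Real.exp (-(K * x)) := by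
          rw [← Real.exp_nat_mul]; ring_nf
  have h2 : (1 - x) ^ K * x ≤ Real.exp (-(K * x)) * x :=
    mul_le_mul_of_nonneg_right h1 hx0
  have h3 : Real.exp (-(K * x)) * (K * x) ≤ Real.exp (-1) := by
    set t := (K : ℝ) * x with ht
    have ht0 : 0 ≤ t := by positivity
    have : t ≤ Real.exp (t - 1) := by
      have := Real.add_one_le_exp (t - 1); linarith
    calc Real.exp (-t) * t ≤ Real.exp (-t) * Real.exp (t - 1) :=
          mul_le_mul_of_nonneg_left this (Real.exp_nonneg _)
      _ = Real.exp (-1) := by rw [← Real.exp_add]; ring_nf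
  have hrw : Real.exp (-1) = 1 / Real.exp 1 := by
    rw [Real.exp_neg]; simp [one_div]
  have h4 : Real.exp (-(K * x)) * x ≤ 1 / (Real.exp 1 * K) := by
    have hprod : Real.exp (-1) * Real.exp 1 = 1 := by
      rw [← Real.exp_add]; simp
    rw [le_div_iff₀ (by positivity)]
    nlinarith [mul_le_mul_of_nonneg_right h3 (Real.exp_pos 1).le]
  linarith

/-- After `K` rounds of multiplicative downweighting by the scores, the total weighted score
is at most `τ_max/(e·K)`. -/
theorem downweighted_score_le (n : ℕ) (hn : 1 ≤ n)
    (w τ : Fin n → ℝ) (hw : ∀ i, 0 ≤ w i) (hwsum : (∑ i, w i) ≤ 1)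
    (hτ : ∀ i, 0 ≤ τ i)
    (hsupp : ∃ i, w i ≠ 0)
    (τmax : ℝ) (hmax : IsGreatest {x : ℝ | ∃ i, w i ≠ 0 ∧ x = τ i} τmax)
    (hmaxpos : 0 < τmax)
    (K : ℕ) (hK : 1 ≤ K)
    (wK : Fin n → ℝ)
    (hwK : ∀ i, wK i = if w i = 0 then 0 else (1 - τ i / τmax) ^ K * w i) :
    (∑ i, wK i * τ i) ≤ τmax / (Real.exp 1 * K) := by
  have hKpos : (0:ℝ) < K := by exact_mod_cast hK
  have hstep : ∀ i, wK i * τ i ≤ τmax / (Real.exp 1 * K) * w i := by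
    intro i
    rw [hwK i]
    by_cases hwi : w i = 0
    · simp [hwi]
    · simp only [hwi, if_false]
      have hle : τ i ≤ τmax := by
        have := hmax.2 ⟨i, hwi, rfl⟩
        exact this
      set x := τ i / τmax with hx
      have hx0 : 0 ≤ x := div_nonneg (hτ i) hmaxpos.le
      have hx1 : x ≤ 1 := (div_le_one hmaxpos).2 hle
      have hkey := key_pow K hK x hx0 hx1
      have hτi : τ i = τmax * x := by rw [hx, mul_div_assoc', mul_div_cancel_left₀ _ hmaxpos.ne']
      have hwpos : 0 < w i := lt_of_le_of_ne (hw i) (Ne.symm hwi)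
      calc (1 - x) ^ K * w i * τ i = ((1 - x) ^ K * x) * τmax * w i := by
            rw [hτi]; ring
        _ ≤ (1 / (Real.exp 1 * K)) * τmax * w i := by
            apply mul_le_mul_of_nonneg_right _ hwpos.le
            exact mul_le_mul_of_nonneg_right hkey hmaxpos.le
        _ = τmax / (Real.exp 1 * K) * w i := by ring
  calc (∑ i, wK i * τ i) ≤ ∑ i, τmax / (Real.exp 1 * K) * w i :=
        Finset.sum_le_sum fun i _ => hstep i
    _ = τmax / (Real.exp 1 * K) * ∑ i, w i := by rw [Finset.mul_sum]
    _ ≤ τmax / (Real.exp 1 * K) * 1 := by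
        apply mul_le_mul_of_nonneg_left hwsum (by positivity)
    _ = τmax / (Real.exp 1 * K) := mul_one _
end
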